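/- arXiv:1512.07549 — 6 statements merged into one kernel-verified Lean document; each statement's English description precedes it below -/
import Mathlib

section
/- Let Ω ⊂ ℝ^n be a bounded open set satisfying the ρ-reflection property. Then sup_{x ∈ ∂Ω} |x| − inf_{x ∈ ∂Ω} |x| ≤ 4ρ. -/
open Metric

/-- Reflection across the hyperplane `{x : x·ν = s}` (for a unit vector `ν`). -/
noncomputable def reflectHyp (n : ℕ) (ν : EuclideanSpace ℝ (Fin n)) (s : ℝ)
    (x : EuclideanSpace ℝ (Fin n)) : EuclideanSpace ℝ (Fin n) :=
  x - (2 * ((inner ℝ x ν : ℝ) - s)) • ν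

/-- `Ω` satisfies the `ρ`-reflection property: it contains the closed ball `B̄_ρ(0)` and,
for every unit direction `ν` and every `s > ρ`, the reflection across `{x·ν = s}` of
`Ω ∩ {x·ν > s}` is contained in `Ω ∩ {x·ν < s}`. -/
def RhoReflection (n : ℕ) (ρ : ℝ) (Ω : Set (EuclideanSpace ℝ (Fin n))) : Prop :=
  closedBall (0 : EuclideanSpace ℝ (Fin n)) ρ ⊆ Ω ∧
    ∀ ν : EuclideanSpace ℝ (Fin n), ‖ν‖ = 1 → ∀ s : ℝ, ρ < s →
      reflectHyp n ν s '' (Ω ∩ {x | s < (inner ℝ x ν : ℝ)}) ⊆ Ω ∩ {x | (inner ℝ x ν : ℝ) < s}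

/-!
If `p ∈ Ω`, `y ∉ Ω` and `‖p‖ > ‖y‖ + 2ρ`, the perpendicular bisector of `p` and `y` lies at
distance `(‖p‖² - ‖y‖²) / (2‖p - y‖) > ρ` from the origin, on the side of `y`. Reflecting
across it sends `p` to `y`, so `ρ`-reflection would force `y ∈ Ω`. Hence
`‖p‖ ≤ ‖y‖ + 2ρ` on `Ω × Ωᶜ`, and by continuity on `closure Ω × closure Ωᶜ ⊇ ∂Ω × ∂Ω`:
the norms on `∂Ω` oscillate by at most `2ρ`.
-/

open scoped RealInnerProductSpace

theorem Real.sSup_sub_sInf_le_of_forall_le_add {S : Set ℝ} {d : ℝ} (hd : 0 ≤ d)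
    (h : ∀ a ∈ S, ∀ b ∈ S, a ≤ b + d) : sSup S - sInf S ≤ d := by
  rcases S.eq_empty_or_nonempty with rfl | hS
  · simpa using hd
  have : sSup S - d ≤ sInf S :=
    le_csInf hS fun b hb => sub_le_iff_le_add.2 (csSup_le hS fun a ha => h a ha b hb)
  linarith

theorem exists_reflectHyp_eq_of_ne {n : ℕ} {p y : EuclideanSpace ℝ (Fin n)} (hpy : p ≠ y) :
    ∃ ν s, ‖ν‖ = 1 ∧ s < ⟪p, ν⟫ ∧ reflectHyp n ν s p = y ∧
      2 * ‖p - y‖ * s = ‖p‖ ^ 2 - ‖y‖ ^ 2 := by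
  have hne : p - y ≠ 0 := sub_ne_zero.2 hpy
  have hc : 0 < ‖p - y‖ := norm_pos_iff.2 hne
  set c := ‖p - y‖
  have hpν : c * ⟪p, c⁻¹ • (p - y)⟫ = ‖p‖ ^ 2 - ⟪p, y⟫ := by
    rw [real_inner_smul_right, inner_sub_right, real_inner_self_eq_norm_sq, mul_inv_cancel_left₀
      hc.ne']
  refine ⟨c⁻¹ • (p - y), ⟪p, c⁻¹ • (p - y)⟫ - c / 2, norm_smul_inv_norm hne, by linarith,
    ?_, ?_⟩
  · rw [reflectHyp, show 2 * (⟪p, c⁻¹ • (p - y)⟫ - (⟪p, c⁻¹ • (p - y)⟫ - c / 2)) = c by ring,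
      smul_smul, mul_inv_cancel₀ hc.ne', one_smul, sub_sub_cancel]
  · have hc2 : c ^ 2 = ‖p‖ ^ 2 - 2 * ⟪p, y⟫ + ‖y‖ ^ 2 := norm_sub_sq_real p y
    linear_combination 2 * hpν - hc2

namespace RhoReflection

variable {n : ℕ} {ρ : ℝ} {Ω : Set (EuclideanSpace ℝ (Fin n))}

theorem norm_le_of_mem_of_notMem (h : RhoReflection n ρ Ω) (hρ : 0 ≤ ρ)
    {p y : EuclideanSpace ℝ (Fin n)} (hp : p ∈ Ω) (hy : y ∉ Ω) : ‖p‖ ≤ ‖y‖ + 2 * ρ := by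
  by_contra! hfar
  obtain ⟨ν, s, hν, hsp, hrefl, hs⟩ := exists_reflectHyp_eq_of_ne (p := p) (y := y)
    (by rintro rfl; linarith)
  -- `2‖p - y‖ s = (‖p‖ - ‖y‖)(‖p‖ + ‖y‖) > 2ρ (‖p‖ + ‖y‖) ≥ 2ρ ‖p - y‖`
  have hρs : ρ < s := by
    have htri := norm_sub_le p y
    have hc : 0 < ‖p - y‖ := by nlinarith [norm_nonneg y, norm_sub_norm_le p y]
    nlinarith [norm_nonneg y, mul_le_mul_of_nonneg_left htri hρ]
  exact hy (hrefl ▸ (h.2 ν hν s hρs ⟨p, ⟨hp, hsp⟩, rfl⟩).1)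

theorem norm_le_of_mem_frontier (h : RhoReflection n ρ Ω) (hρ : 0 ≤ ρ)
    {x y : EuclideanSpace ℝ (Fin n)} (hx : x ∈ frontier Ω) (hy : y ∈ frontier Ω) :
    ‖x‖ ≤ ‖y‖ + 2 * ρ := by
  have hclosed : IsClosed {q : EuclideanSpace ℝ (Fin n) × EuclideanSpace ℝ (Fin n) |
      ‖q.1‖ ≤ ‖q.2‖ + 2 * ρ} :=
    isClosed_le continuous_fst.norm (continuous_snd.norm.add continuous_const)
  have hsub : closure (Ω ×ˢ Ωᶜ) ⊆ {q | ‖q.1‖ ≤ ‖q.2‖ + 2 * ρ} :=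
    hclosed.closure_subset_iff.2 fun q hq => h.norm_le_of_mem_of_notMem hρ hq.1 hq.2
  rw [closure_prod_eq] at hsub
  rw [← frontier_compl] at hy
  have hxy := hsub (Set.mk_mem_prod (frontier_subset_closure hx) (frontier_subset_closure hy))
  rwa [Set.mem_ofPred_eq] at hxy

end RhoReflection

theorem rhoReflection_boundary_norm_osc_general (n : ℕ) (ρ : ℝ) (hρ : 0 < ρ)
    (Ω : Set (EuclideanSpace ℝ (Fin n)))
    (href : RhoReflection n ρ Ω) :
    sSup ((fun x => ‖x‖) '' frontier Ω) - sInf ((fun x => ‖x‖) '' frontier Ω) ≤ 4 * ρ := by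
  have hosc := Real.sSup_sub_sInf_le_of_forall_le_add (S := (fun x => ‖x‖) '' frontier Ω)
    (by positivity : 0 ≤ 2 * ρ) <| by
    rintro _ ⟨x, hx, rfl⟩ _ ⟨y, hy, rfl⟩
    exact href.norm_le_of_mem_frontier hρ.le hx hy
  linarith

/-- If a bounded open set `Ω` satisfies `ρ`-reflection, then
`sup_{x ∈ ∂Ω} |x| - inf_{x ∈ ∂Ω} |x| ≤ 4ρ`. -/
theorem rhoReflection_boundary_norm_osc (n : ℕ) (ρ : ℝ) (hρ : 0 < ρ)
    (Ω : Set (EuclideanSpace ℝ (Fin n)))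
    (hopen : IsOpen Ω) (hbdd : Bornology.IsBounded Ω)
    (href : RhoReflection n ρ Ω) :
    sSup ((fun x => ‖x‖) '' frontier Ω) - sInf ((fun x => ‖x‖) '' frontier Ω) ≤ 4 * ρ :=
  rhoReflection_boundary_norm_osc_general n ρ hρ Ω href
end

section
/- Let Ω ⊂ ℝ^n be a bounded open set satisfying the ρ-reflection property, and set r = (inf_{x ∈ ∂Ω} |x|² − ρ²)^{1/2} (well-defined since B_ρ(0) ⊂⊂ Ω). Then Ω is star-shaped with respect to the ball B_r(0), i.e., for every y ∈ B_r(0) and every x ∈ Ω, the segment from y to x is contained in Ω. -/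
/-!
Suppose a point of a segment `[y, x]` with `x ∈ Ω` leaves `Ω`. Since segments are connected
and `Ω` is open, the segment then meets `∂Ω` in a point `z ≠ x`, and `|z|² ≥ r² + ρ² > |y|² + ρ²`.
Expanding `|z - y|²` and using `ρ² + |z - y|² ≥ 2ρ|z - y|` gives `⟨z, ν⟩ > ρ` for the unit
vector `ν` pointing from `y` to `x`. The reflection in the hyperplane `{u · ν = s}` halfway
between `z` and `x` then has `s > ρ` and maps `x ∈ Ω` to `z`, so `z ∈ Ω`: a contradiction.
-/

open Metric

open RealInnerProductSpace

theorem sq_norm_add_sq_lt_of_lt_sqrt_sInf {E : Type*} [SeminormedAddCommGroup E] {S : Set E}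
    {ρ : ℝ} {y z : E} (hy : ‖y‖ < √(sInf ((fun x => ‖x‖ ^ 2) '' S) - ρ ^ 2)) (hz : z ∈ S) :
    ‖y‖ ^ 2 + ρ ^ 2 < ‖z‖ ^ 2 := by
  have hy' := (Real.lt_sqrt (norm_nonneg y)).1 hy
  have hz' : sInf ((fun x => ‖x‖ ^ 2) '' S) ≤ ‖z‖ ^ 2 :=
    csInf_le ⟨0, by rintro _ ⟨x, -, rfl⟩; positivity⟩ ⟨z, hz, rfl⟩
  linarith

theorem mul_norm_sub_lt_inner_sub {F : Type*} [NormedAddCommGroup F] [InnerProductSpace ℝ F]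
    {ρ : ℝ} {y z : F} (h : ‖y‖ ^ 2 + ρ ^ 2 < ‖z‖ ^ 2) : ρ * ‖z - y‖ < ⟪z, z - y⟫ := by
  have hexp : ‖z - y‖ ^ 2 = ‖z‖ ^ 2 - 2 * ⟪z, y⟫ + ‖y‖ ^ 2 := norm_sub_sq_real z y
  rw [inner_sub_right, real_inner_self_eq_norm_sq]
  nlinarith [sq_nonneg (ρ - ‖z - y‖)]

theorem reflectHyp_add_smul {n : ℕ} {ν : EuclideanSpace ℝ (Fin n)} (hν : ‖ν‖ = 1)
    (z : EuclideanSpace ℝ (Fin n)) (c : ℝ) :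
    reflectHyp n ν (⟪z, ν⟫ + c / 2) (z + c • ν) = z := by
  rw [reflectHyp, inner_add_left, real_inner_smul_left, real_inner_self_eq_norm_sq, hν]
  module

theorem RhoReflection.mem_of_add_smul_mem {n : ℕ} {ρ : ℝ} {Ω : Set (EuclideanSpace ℝ (Fin n))}
    (h : RhoReflection n ρ Ω) {z v : EuclideanSpace ℝ (Fin n)} {c : ℝ}
    (hv : ρ * ‖v‖ < ⟪z, v⟫) (hc : 0 < c) (hw : z + c • v ∈ Ω) : z ∈ Ω := by
  have hv0 : v ≠ 0 := by
    rintro rfl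
    simp at hv
  have hδ : 0 < ‖v‖ := norm_pos_iff.2 hv0
  set ν := ‖v‖⁻¹ • v
  have hν : ‖ν‖ = 1 := norm_smul_inv_norm hv0
  have hzν : ρ < ⟪z, ν⟫ := by
    rw [real_inner_smul_right, lt_inv_mul_iff₀ hδ, mul_comm]
    exact hv
  have hw' : z + c • v = z + (c * ‖v‖) • ν := by
    rw [mul_smul, smul_inv_smul₀ hδ.ne']
  have hcδ : 0 < c * ‖v‖ := mul_pos hc hδ
  have hs : ρ < ⟪z, ν⟫ + c * ‖v‖ / 2 := by linarith
  have hws : ⟪z, ν⟫ + c * ‖v‖ / 2 < ⟪z + (c * ‖v‖) • ν, ν⟫ := by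
    rw [inner_add_left, real_inner_smul_left, real_inner_self_eq_norm_sq, hν]
    linarith
  rw [hw'] at hw
  exact (h.2 ν hν _ hs ⟨_, ⟨hw, hws⟩, reflectHyp_add_smul hν z _⟩).1

theorem rhoReflection_starShaped_general (n : ℕ) (ρ : ℝ)
    (Ω : Set (EuclideanSpace ℝ (Fin n)))
    (hopen : IsOpen Ω)
    (href : RhoReflection n ρ Ω)
    (r : ℝ) (hr : r = Real.sqrt (sInf ((fun x => ‖x‖ ^ 2) '' frontier Ω) - ρ ^ 2)) :
    ∀ y ∈ ball (0 : EuclideanSpace ℝ (Fin n)) r, ∀ x ∈ Ω, segment ℝ y x ⊆ Ω := by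
  intro y hy x hx
  refine (convex_segment y x).isPreconnected.subset_of_closure_inter_subset hopen
    ⟨x, right_mem_segment ℝ y x, hx⟩ ?_
  rintro z ⟨hzcl, hzseg⟩
  by_contra hzΩ
  have hzfr : z ∈ frontier Ω := ⟨hzcl, fun hz => hzΩ (interior_subset hz)⟩
  have hy' : ‖y‖ < r := mem_ball_zero_iff.1 hy
  have hzy : ρ * ‖z - y‖ < ⟪z, z - y⟫ :=
    mul_norm_sub_lt_inner_sub (sq_norm_add_sq_lt_of_lt_sqrt_sInf (hr ▸ hy') hzfr)
  have hzy0 : z - y ≠ 0 := by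
    rintro hzy0
    simp [hzy0] at hzy
  obtain ⟨κ, hκ, hxz⟩ := (mem_segment_iff_sameRay.1 hzseg).exists_pos_left hzy0
    (sub_ne_zero.2 fun hxz => hzΩ (hxz ▸ hx))
  exact hzΩ (href.mem_of_add_smul_mem hzy hκ (by rwa [hxz, add_sub_cancel]))

/-- If a bounded open set `Ω` satisfies `ρ`-reflection and
`r = (inf_{x ∈ ∂Ω} |x|² - ρ²)^{1/2}`, then `Ω` is star-shaped with respect to the
ball `B_r(0)`: for every `y ∈ B_r(0)` and every `x ∈ Ω` the segment `[y,x]` lies in `Ω`. -/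
theorem rhoReflection_starShaped (n : ℕ) (ρ : ℝ) (hρ : 0 < ρ)
    (Ω : Set (EuclideanSpace ℝ (Fin n)))
    (hopen : IsOpen Ω) (hbdd : Bornology.IsBounded Ω)
    (hfr : (frontier Ω).Nonempty)
    (href : RhoReflection n ρ Ω)
    (r : ℝ) (hr : r = Real.sqrt (sInf ((fun x => ‖x‖ ^ 2) '' frontier Ω) - ρ ^ 2)) :
    ∀ y ∈ ball (0 : EuclideanSpace ℝ (Fin n)) r, ∀ x ∈ Ω, segment ℝ y x ⊆ Ω :=
  rhoReflection_starShaped_general n ρ Ω hopen href r hr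
end

section
/- Let Ω ⊂ ℝ^n be a bounded open set containing B_r(0) that is star-shaped with respect to the ball B_r(0). Then for every ε with 0 < ε < ε₀ (for some ε₀ > 0 depending on Ω) and every 0 < a < r, one has Ω ⊂⊂ ∩_{|z| ≤ aε} ((1+ε)Ω + z). -/
/- Every point `y` of `B_r(0)` is a star centre of `Ω`, and this persists to `closure Ω` off the
endpoint: `s • y + (1 - s) • x ∈ Ω` for `x ∈ closure Ω` and `0 < s ≤ 1`, because the same point
equals `s • y' + (1 - s) • x'` with `x' ∈ Ω` near `x` and `y' = y + ((1 - s) / s) • (x - x')`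
still in the open ball. Given `‖z‖ ≤ a ε < r ε`, the choice `y = -ε⁻¹ • z`, `s = ε / (1 + ε)`
gives `w ∈ Ω` with `(1 + ε) • w + z = x`; compactness of `closure Ω` is boundedness. -/

open Metric

/-- `Ω` is star-shaped with respect to the ball `B_r(0)`: for every `y ∈ B_r(0)` and
`x ∈ Ω`, the segment `[y,x]` lies in `Ω`. -/
def StarShapedWrtBall (n : ℕ) (r : ℝ) (Ω : Set (EuclideanSpace ℝ (Fin n))) : Prop :=
  ∀ y ∈ ball (0 : EuclideanSpace ℝ (Fin n)) r, ∀ x ∈ Ω, segment ℝ y x ⊆ Ω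

open Filter Topology

theorem smul_add_smul_mem_of_mem_closure {E : Type*} [AddCommGroup E] [Module ℝ E]
    [TopologicalSpace E] [IsTopologicalAddGroup E] [ContinuousSMul ℝ E]
    {Ω U : Set E} (hU : IsOpen U) (hstar : ∀ y ∈ U, StarConvex ℝ y Ω)
    {x y : E} (hx : x ∈ closure Ω) (hy : y ∈ U) {s : ℝ} (hs₀ : 0 < s) (hs₁ : s ≤ 1) :
    s • y + (1 - s) • x ∈ Ω := by
  set shift : E → E := fun x' => y + ((1 - s) / s) • (x - x')
  have hshift : Tendsto shift (𝓝 x) (𝓝 y) := by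
    have hcont : Continuous shift := by fun_prop
    simpa [shift] using hcont.tendsto x
  obtain ⟨x', hx'Ω, hx'U⟩ := ((mem_closure_iff_frequently.1 hx).and_eventually
    (hshift.eventually_mem (hU.mem_nhds hy))).exists
  have hcombo : s • shift x' + (1 - s) • x' = s • y + (1 - s) • x := by
    have hs : s * ((1 - s) / s) = 1 - s := mul_div_cancel₀ _ hs₀.ne'
    simp only [shift, smul_add, smul_smul, hs]
    module
  rw [← hcombo]
  exact hstar _ hx'U hx'Ω hs₀.le (sub_nonneg.2 hs₁) (add_sub_cancel _ _)

theorem mem_image_dilation_add_of_mem_closure {E : Type*} [NormedAddCommGroup E]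
    [NormedSpace ℝ E] {Ω : Set E} {r : ℝ} (hstar : ∀ y ∈ ball (0 : E) r, StarConvex ℝ y Ω)
    {x z : E} (hx : x ∈ closure Ω) {ε : ℝ} (hε : 0 < ε) (hz : ‖z‖ < ε * r) :
    x ∈ (fun w => (1 + ε) • w + z) '' Ω := by
  have hy : -ε⁻¹ • z ∈ ball (0 : E) r := by
    rw [mem_ball_zero_iff, norm_smul, norm_neg, norm_inv, Real.norm_of_nonneg hε.le]
    rwa [inv_mul_lt_iff₀ hε]
  have hs₀ : 0 < ε / (1 + ε) := by positivity
  have hs₁ : ε / (1 + ε) ≤ 1 := (div_le_one (by positivity)).2 (by linarith)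
  refine ⟨_, smul_add_smul_mem_of_mem_closure isOpen_ball hstar hx hy hs₀ hs₁, ?_⟩
  match_scalars <;> field_simp <;> ring

theorem starShaped_dilation_containment_general (n : ℕ) (r : ℝ)
    (Ω : Set (EuclideanSpace ℝ (Fin n)))
    (hbdd : Bornology.IsBounded Ω)
    (hstar : StarShapedWrtBall n r Ω) :
    ∃ ε₀ > 0, ∀ ε : ℝ, 0 < ε → ε < ε₀ → ∀ a : ℝ, 0 < a → a < r →
      IsCompact (closure Ω) ∧
        closure Ω ⊆
          ⋂ z ∈ closedBall (0 : EuclideanSpace ℝ (Fin n)) (a * ε),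
            (fun x => (1 + ε) • x + z) '' Ω := by
  have hstar' : ∀ y ∈ ball (0 : EuclideanSpace ℝ (Fin n)) r, StarConvex ℝ y Ω :=
    fun y hy => starConvex_iff_segment_subset.2 (hstar y hy)
  refine ⟨1, one_pos, fun ε hε _ a _ har => ⟨hbdd.isCompact_closure, fun x hx => ?_⟩⟩
  refine Set.mem_iInter₂.2 fun z hz => mem_image_dilation_add_of_mem_closure hstar' hx hε ?_
  calc ‖z‖ ≤ a * ε := mem_closedBall_zero_iff.1 hz
    _ < ε * r := by rw [mul_comm]; exact mul_lt_mul_of_pos_left har hε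

/-- If a bounded open set `Ω ⊇ B_r(0)` is star-shaped with respect to `B_r(0)`, then
there is `ε₀ > 0` such that for every `0 < ε < ε₀` and `0 < a < r`,
`Ω ⊂⊂ ∩_{|z| ≤ aε} ((1+ε)Ω + z)` (compact containment). -/
theorem starShaped_dilation_containment (n : ℕ) (r : ℝ) (hr : 0 < r)
    (Ω : Set (EuclideanSpace ℝ (Fin n)))
    (hopen : IsOpen Ω) (hbdd : Bornology.IsBounded Ω)
    (hball : ball (0 : EuclideanSpace ℝ (Fin n)) r ⊆ Ω)
    (hstar : StarShapedWrtBall n r Ω) :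
    ∃ ε₀ > 0, ∀ ε : ℝ, 0 < ε → ε < ε₀ → ∀ a : ℝ, 0 < a → a < r →
      IsCompact (closure Ω) ∧
        closure Ω ⊆
          ⋂ z ∈ closedBall (0 : EuclideanSpace ℝ (Fin n)) (a * ε),
            (fun x => (1 + ε) • x + z) '' Ω :=
  starShaped_dilation_containment_general n r Ω hbdd hstar
end

section
/- Let Ω = {x : φ(x) > 0} be a bounded open set with smooth compact boundary ∂Ω = {φ = 0}, where ∇φ ≠ 0 on ∂Ω, and suppose B_r(0) ⊂ Ω. Then Ω is star-shaped with respect to the ball B_r(0) if and only if for every x ∈ ∂Ω, x · n_x ≥ r, where n_x = −∇φ(x)/|∇φ(x)| is the outward unit normal at x. -/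
open Metric

section Aux
open Metric Filter Set InnerProductSpace

private lemma deriv_nonneg_right' {ψ : ℝ → ℝ} {t₀ d : ℝ} (h : HasDerivAt ψ d t₀)
    (h0 : ψ t₀ = 0) (hpos : ∀ᶠ t in nhdsWithin t₀ (Ioi t₀), 0 ≤ ψ t) : 0 ≤ d := by
  have hd := (h.hasDerivWithinAt (s := Ioi t₀))
  rw [hasDerivWithinAt_iff_tendsto_slope] at hd
  have hss : Ioi t₀ \ {t₀} = Ioi t₀ := by
    ext t; simp (config := {contextual := true}) [lt_irrefl, ne_of_gt, LT.lt.ne']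
  rw [hss] at hd
  refine ge_of_tendsto hd ?_
  filter_upwards [hpos, self_mem_nhdsWithin] with t ht ht'
  have h1 : (0:ℝ) < t - t₀ := sub_pos.2 ht'
  rw [slope_def_field, div_eq_mul_inv]
  have : 0 ≤ (ψ t - ψ t₀) / (t - t₀) := div_nonneg (by rw [h0]; simpa using ht) h1.le
  rw [div_eq_mul_inv] at this
  exact this

private lemma hasDerivAt_phi_line {n : ℕ} {φ : EuclideanSpace ℝ (Fin n) → ℝ}
    (hφ : ContDiff ℝ (⊤ : ℕ∞) φ) (a v : EuclideanSpace ℝ (Fin n)) (t : ℝ) :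
    HasDerivAt (fun s => φ (a + s • v)) (inner ℝ (gradient φ (a + t • v)) v : ℝ) t := by
  have hγ : HasDerivAt (fun s : ℝ => a + s • v) v t := by
    simpa using ((hasDerivAt_id t).smul_const v).const_add a
  have hd : HasGradientAt φ (gradient φ (a + t • v)) (a + t • v) :=
    (hφ.differentiable (by simp) _).hasGradientAt
  have := (hasGradientAt_iff_hasFDerivAt.1 hd).comp_hasDerivAt t hγ
  rw [← hasGradientAt_iff_hasFDerivAt.1 hd |>.fderiv] at this
  simpa [Function.comp_def, InnerProductSpace.toDual_apply_apply] using this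

private lemma inner_cond_iff' {n : ℕ} {g x : EuclideanSpace ℝ (Fin n)} (hg : g ≠ 0) {r : ℝ} :
    r ≤ (inner ℝ x (-(‖g‖⁻¹ • g)) : ℝ) ↔ (inner ℝ g x : ℝ) ≤ -(r * ‖g‖) := by
  have hn : (0:ℝ) < ‖g‖ := norm_pos_iff.2 hg
  have hinv : (0:ℝ) < ‖g‖⁻¹ := inv_pos.2 hn
  have hc : ‖g‖ * ‖g‖⁻¹ = 1 := mul_inv_cancel₀ hn.ne'
  rw [inner_neg_right, real_inner_smul_right, real_inner_comm, le_neg,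
    inv_mul_le_iff₀ hn]
  constructor <;> intro h <;> nlinarith [h]

open Bornology in
theorem starShaped_iff_normal_inner' (n : ℕ) (r : ℝ) (hr : 0 < r)
    (φ : EuclideanSpace ℝ (Fin n) → ℝ) (hφ : ContDiff ℝ (⊤ : ℕ∞) φ)
    (Ω : Set (EuclideanSpace ℝ (Fin n))) (hΩ : Ω = {x | 0 < φ x})
    (hgrad : ∀ x ∈ frontier Ω, gradient φ x ≠ 0)
    (hball : ball (0 : EuclideanSpace ℝ (Fin n)) r ⊆ Ω) :
    (∀ y ∈ ball (0 : EuclideanSpace ℝ (Fin n)) r, ∀ x ∈ Ω, segment ℝ y x ⊆ Ω) ↔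
      ∀ x ∈ frontier Ω,
        r ≤ (inner ℝ x (-(‖gradient φ x‖⁻¹ • gradient φ x)) : ℝ) := by
  have hopen : IsOpen Ω := by
    rw [hΩ]; exact isOpen_lt continuous_const hφ.continuous
  have hclsub : closure Ω ⊆ {x | 0 ≤ φ x} := by
    refine closure_minimal ?_ (isClosed_le continuous_const hφ.continuous)
    rw [hΩ]; exact fun x (hx : 0 < φ x) => hx.le
  have hfr : ∀ x ∈ frontier Ω, φ x = 0 ∧ x ∈ closure Ω ∧ x ∉ Ω := by
    intro x hx
    rw [frontier, hopen.interior_eq] at hx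
    refine ⟨le_antisymm ?_ (hclsub hx.1), hx.1, hx.2⟩
    by_contra h
    push_neg at h
    exact hx.2 (by rw [hΩ]; exact h)
  constructor
  · -- star-shaped → normal condition
    intro hstar x hx
    obtain ⟨hφx, hxcl, hxΩ⟩ := hfr x hx
    set g := gradient φ x with hgdef
    have hg : g ≠ 0 := hgrad x hx
    have hgn : (0:ℝ) < ‖g‖ := norm_pos_iff.2 hg
    -- key claim
    have key : ∀ y ∈ ball (0 : EuclideanSpace ℝ (Fin n)) r, (inner ℝ g x : ℝ) ≤ inner ℝ g y := by
      intro y hy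
      have hcl : ∀ t ∈ Icc (0:ℝ) 1, x + t • (y - x) ∈ closure Ω := by
        intro t ht
        have hmap : ∀ p ∈ Ω, (1 - t) • p + t • y ∈ Ω := by
          intro p hp
          exact hstar y hy p hp ⟨t, 1 - t, ht.1, by linarith [ht.2], by ring, by module⟩
        have hcont : Continuous (fun p : EuclideanSpace ℝ (Fin n) => (1 - t) • p + t • y) := by
          fun_prop
        have := map_mem_closure hcont hxcl hmap
        convert this using 1
        module
      have hψ := hasDerivAt_phi_line hφ x (y - x) 0
      have hψ0 : φ (x + (0:ℝ) • (y - x)) = 0 := by simpa using hφx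
      have hd : 0 ≤ (inner ℝ (gradient φ (x + (0:ℝ) • (y - x))) (y - x) : ℝ) := by
        refine deriv_nonneg_right' hψ hψ0 ?_
        filter_upwards [Ioo_mem_nhdsGT_of_mem (Set.mem_Ico.2 ⟨le_refl (0:ℝ), one_pos⟩)]
          with t ht
        exact hclsub (hcl t ⟨ht.1.le, ht.2.le⟩)
      have hx0 : x + (0:ℝ) • (y - x) = x := by simp
      rw [hx0] at hd
      rw [inner_sub_right] at hd
      linarith
    -- closed set argument
    have hS : closedBall (0 : EuclideanSpace ℝ (Fin n)) r ⊆
        {y | (inner ℝ g x : ℝ) ≤ inner ℝ g y} := by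
      rw [← closure_ball (0 : EuclideanSpace ℝ (Fin n)) hr.ne']
      refine closure_minimal key (isClosed_le continuous_const ?_)
      exact continuous_const.inner continuous_id
    have hy₀ : (-(r * ‖g‖⁻¹)) • g ∈ closedBall (0 : EuclideanSpace ℝ (Fin n)) r := by
      rw [mem_closedBall, dist_zero_right, norm_smul]
      rw [Real.norm_eq_abs, abs_neg, abs_of_nonneg (by positivity)]
      rw [mul_assoc, inv_mul_cancel₀ hgn.ne']
      simp [hr.le]
    have := hS hy₀
    rw [Set.mem_setOf_eq, real_inner_smul_right, real_inner_self_eq_norm_mul_norm] at this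
    rw [inner_cond_iff' hg]
    have hgne : ‖g‖ ≠ 0 := hgn.ne'
    have heq : -(r * ‖g‖⁻¹) * (‖g‖ * ‖g‖) = -(r * ‖g‖) := by field_simp
    linarith [this, heq.le, heq.ge]
  · -- normal condition → star-shaped
    intro H y hy x hx p hp
    rw [hΩ, Set.mem_setOf_eq]
    by_contra hφp
    push_neg at hφp
    obtain ⟨a, b, ha, hb, hab, hpab⟩ := hp
    set γ : ℝ → EuclideanSpace ℝ (Fin n) := fun t => y + t • (x - y) with hγdef
    have hpγ : p = γ b := by
      rw [← hpab]
      show a • y + b • x = y + b • (x - y)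
      rw [show a = 1 - b by linarith]
      module
    have hb1 : b ≤ 1 := by linarith
    have hφy : 0 < φ y := by have := hball hy; rwa [hΩ] at this
    have hφx : 0 < φ x := by rwa [hΩ] at hx
    have hγ1 : γ 1 = x := by show y + (1:ℝ) • (x - y) = x; module
    have hγcont : Continuous γ := by
      exact continuous_const.add (continuous_id.smul continuous_const)
    set T : Set ℝ := Icc b 1 ∩ (fun t => φ (γ t)) ⁻¹' Iic 0 with hTdef
    have hTcomp : IsCompact T :=
      isCompact_Icc.inter_right (IsClosed.preimage (hφ.continuous.comp hγcont) isClosed_Iic)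
    have hTne : T.Nonempty := ⟨b, ⟨le_refl b, hb1⟩, by simpa [← hpγ] using hφp⟩
    set t₁ := sSup T with ht₁def
    have ht₁T : t₁ ∈ T := hTcomp.sSup_mem hTne
    have ht₁ub : ∀ t ∈ T, t ≤ t₁ := fun t ht => le_csSup hTcomp.bddAbove ht
    have hT2 : φ (γ t₁) ≤ 0 := ht₁T.2
    have ht₁le1 : t₁ ≤ 1 := ht₁T.1.2
    have ht₁lt1 : t₁ < 1 := by
      refine lt_of_le_of_ne ht₁le1 (fun h => ?_)
      rw [h, hγ1] at hT2
      exact absurd hT2 (not_le.2 hφx)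
    have hb0le : (0:ℝ) ≤ t₁ := le_trans hb ht₁T.1.1
    have hpos' : ∀ t, t₁ < t → t ≤ 1 → 0 < φ (γ t) := by
      intro t h1 h2
      by_contra hle
      push_neg at hle
      exact absurd (ht₁ub t ⟨⟨le_trans ht₁T.1.1 h1.le, h2⟩, hle⟩) (not_le.2 h1)
    set z := γ t₁ with hzdef
    have htend : Tendsto γ (nhdsWithin t₁ (Ioi t₁)) (nhds z) :=
      (hγcont.continuousAt.tendsto).mono_left nhdsWithin_le_nhds
    have hev : ∀ᶠ t in nhdsWithin t₁ (Ioi t₁), γ t ∈ Ω := by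
      filter_upwards [Ioo_mem_nhdsGT_of_mem (Set.mem_Ico.2 ⟨le_refl t₁, ht₁lt1⟩)] with t ht
      rw [hΩ]; exact hpos' t ht.1 ht.2.le
    have hzcl : z ∈ closure Ω := mem_closure_of_tendsto htend hev
    have hφz : φ z = 0 := le_antisymm hT2 (hclsub hzcl)
    have hzΩ : z ∉ Ω := by rw [hΩ]; simp [hφz]
    have hzfr : z ∈ frontier Ω := by
      rw [frontier, hopen.interior_eq]; exact ⟨hzcl, hzΩ⟩
    set g := gradient φ z with hgdef
    have hg : g ≠ 0 := hgrad z hzfr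
    have hgn : (0:ℝ) < ‖g‖ := norm_pos_iff.2 hg
    have hH : (inner ℝ g z : ℝ) ≤ -(r * ‖g‖) := (inner_cond_iff' hg).1 (H z hzfr)
    have hψ := hasDerivAt_phi_line hφ y (x - y) t₁
    have hzeq : y + t₁ • (x - y) = z := rfl
    rw [hzeq, ← hgdef] at hψ
    have hd : 0 ≤ (inner ℝ g (x - y) : ℝ) := by
      refine deriv_nonneg_right' hψ (by simpa [hzeq] using hφz) ?_
      filter_upwards [Ioo_mem_nhdsGT_of_mem (Set.mem_Ico.2 ⟨le_refl t₁, ht₁lt1⟩)] with t ht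
      exact (hpos' t ht.1 ht.2.le).le
    have hinz : (inner ℝ g z : ℝ) = inner ℝ g y + t₁ * inner ℝ g (x - y) := by
      have hze : z = y + t₁ • (x - y) := rfl
      rw [hze, inner_add_right, real_inner_smul_right]
    have hlow : -(‖g‖ * ‖y‖) ≤ (inner ℝ g y : ℝ) := neg_le_of_abs_le (abs_real_inner_le_norm g y)
    have hyr : ‖y‖ < r := by rwa [mem_ball, dist_zero_right] at hy
    nlinarith [mul_pos hgn (sub_pos.2 hyr), mul_nonneg hb0le hd]

end Aux

/-- For `Ω = {φ > 0}` bounded open with smooth compact boundary on which `∇φ ≠ 0`,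
and `B_r(0) ⊆ Ω`: `Ω` is star-shaped with respect to `B_r(0)` if and only if
`x · n_x ≥ r` for all `x ∈ ∂Ω`, where `n_x = -∇φ(x)/|∇φ(x)|` is the outward unit normal. -/
theorem starShaped_iff_normal_inner (n : ℕ) (r : ℝ) (hr : 0 < r)
    (φ : EuclideanSpace ℝ (Fin n) → ℝ) (hφ : ContDiff ℝ (⊤ : ℕ∞) φ)
    (Ω : Set (EuclideanSpace ℝ (Fin n))) (hΩ : Ω = {x | 0 < φ x})
    (hbdd : Bornology.IsBounded Ω)
    (hfr : IsCompact (frontier Ω))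
    (hgrad : ∀ x ∈ frontier Ω, gradient φ x ≠ 0)
    (hball : ball (0 : EuclideanSpace ℝ (Fin n)) r ⊆ Ω) :
    StarShapedWrtBall n r Ω ↔
      ∀ x ∈ frontier Ω,
        r ≤ (inner ℝ x (-(‖gradient φ x‖⁻¹ • gradient φ x)) : ℝ) := by
  exact starShaped_iff_normal_inner' n r hr φ hφ Ω hΩ hgrad hball
end

section
/- Let r, R > 0 and let F_k, F_∞ be compact sets in S_{r,R} (star-shaped with respect to B_r(0) and contained in B_R(0)) for k ∈ ℕ ∪ {∞}. Define the pseudo-distance d̃(E,F) = (∫_{E△F} dist(x, ∂E) dx)^{1/2}. Then d̃(F_k, F_∞) → 0 as k → ∞ if and only if F_k → F_∞ in the Hausdorff metric. -/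
/-!
Every point `x` of a set in `S_{r,R}` carries the cone ball `B((1 - t) x, t r)` inside the set.
If `d_H(E, F)` is large, such a ball around a point of one set far from the other lies in
`E △ F`, and on its inner half `dist(·, ∂E)` is bounded below, so `d̃(E, F)` is bounded below.
Conversely, every point of `E △ F` lies within `(R / r) d_H(E, F)` of `∂E`, so
`d̃(E, F)² ≤ (R / r) d_H(E, F) |B_R|`.
-/

open Metric MeasureTheory Filter

/-- The class `S_{r,R}` of compact sets `B_r(0) ⊆ Ω ⊆ B̄_R(0)` star-shaped with
respect to `B_r(0)`. -/
def MemSrR (n : ℕ) (r R : ℝ) (Ω : Set (EuclideanSpace ℝ (Fin n))) : Prop :=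
  ball (0 : EuclideanSpace ℝ (Fin n)) r ⊆ Ω ∧
    Ω ⊆ closedBall (0 : EuclideanSpace ℝ (Fin n)) R ∧ StarShapedWrtBall n r Ω

/-- The pseudo-distance `d̃(E,F) = (∫_{E△F} dist(x,∂E) dx)^{1/2}`. -/
noncomputable def dtil (n : ℕ) (E F : Set (EuclideanSpace ℝ (Fin n))) : ℝ :=
  Real.sqrt (∫ x in symmDiff E F, infDist x (frontier E))

open Set

section Frontier

variable {V : Type*} [NormedAddCommGroup V] [NormedSpace ℝ V]

theorem infDist_frontier_le_infDist_compl [FiniteDimensional ℝ V] {s : Set V} {x : V}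
    (hx : x ∈ s) : infDist x (frontier s) ≤ infDist x sᶜ := by
  rcases eq_or_ne s univ with rfl | hs
  · simp
  obtain ⟨p, hp, hdist⟩ := exists_mem_frontier_infDist_compl_eq_dist hx hs
  exact hdist ▸ infDist_le_dist_of_mem hp

theorem infDist_frontier_le_infDist [FiniteDimensional ℝ V] {s : Set V} {x : V}
    (hx : x ∉ s) : infDist x (frontier s) ≤ infDist x s := by
  simpa only [frontier_compl, compl_compl] using
    infDist_frontier_le_infDist_compl (s := sᶜ) hx

theorem infDist_frontier_le_dist [FiniteDimensional ℝ V] {s : Set V} {x y : V}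
    (hx : x ∈ s) (hy : y ∉ s) : infDist x (frontier s) ≤ dist x y :=
  (infDist_frontier_le_infDist_compl hx).trans (infDist_le_dist_of_mem hy)

theorem le_infDist_frontier_of_ball_subset {s : Set V} {y : V} {ρ : ℝ}
    (hρ : 0 < ρ) (hball : ball y ρ ⊆ s) (hs : s ≠ univ) : ρ ≤ infDist y (frontier s) := by
  have hne : (frontier s).Nonempty :=
    nonempty_frontier_iff.2 ⟨⟨y, hball (mem_ball_self hρ)⟩, hs⟩
  refine (le_infDist hne).2 fun p hp => ?_
  have hp_ball : p ∉ ball y ρ := fun h =>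
    hp.2 (interior_mono hball (by rwa [isOpen_ball.interior_eq]))
  simpa [mem_ball, dist_comm] using hp_ball

end Frontier

theorem le_setIntegral_of_ball_subset {V : Type*} [NormedAddCommGroup V] [NormedSpace ℝ V]
    [FiniteDimensional ℝ V] [MeasurableSpace V] [BorelSpace V] {μ : Measure V}
    [μ.IsAddHaarMeasure] {f : V → ℝ} {s : Set V} {z : V} {ρ c : ℝ}
    (hf : IntegrableOn f s μ) (hf₀ : ∀ x, 0 ≤ f x) (hsub : ball z ρ ⊆ s)
    (hc : ∀ y ∈ ball z ρ, c ≤ f y) : c * μ.real (ball 0 ρ) ≤ ∫ x in s, f x ∂μ := by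
  rw [measureReal_def, ← Measure.addHaar_ball_center μ z, ← measureReal_def]
  exact (setIntegral_ge_of_const_le_real measurableSet_ball measure_ball_lt_top.ne hc
    (hf.mono_set hsub)).trans
    (setIntegral_mono_set hf (.of_forall hf₀) hsub.eventuallyLE)

section StarShaped

variable {n : ℕ} {r R : ℝ}

local notation "𝔼" => EuclideanSpace ℝ (Fin n)

theorem StarShapedWrtBall.ball_smul_subset {E : Set 𝔼} (hE : StarShapedWrtBall n r E)
    {x : 𝔼} (hx : x ∈ E) {t : ℝ} (ht₀ : 0 < t) (ht₁ : t ≤ 1) :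
    ball ((1 - t) • x) (t * r) ⊆ E := by
  intro y hy
  have hw : t⁻¹ • (y - (1 - t) • x) ∈ ball (0 : 𝔼) r := by
    rw [mem_ball_zero_iff, norm_smul, norm_inv, Real.norm_of_nonneg ht₀.le, inv_mul_lt_iff₀ ht₀]
    rwa [mem_ball, dist_eq_norm] at hy
  refine hE _ hw x hx ⟨t, 1 - t, ht₀.le, by linarith, by ring, ?_⟩
  rw [smul_smul, mul_inv_cancel₀ ht₀.ne', one_smul, sub_add_cancel]

theorem StarShapedWrtBall.mem_of_dist_smul_lt {E : Set 𝔼} (hE : StarShapedWrtBall n r E)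
    {q z : 𝔼} (hz : z ∈ E) {μ : ℝ} (hμ : 1 < μ) (hdist : dist (μ • q) z < (μ - 1) * r) :
    q ∈ E := by
  have hμ₀ : 0 < μ := by linarith
  refine hE.ball_smul_subset hz (t := 1 - μ⁻¹) (by simp [inv_lt_one_of_one_lt₀ hμ])
    (by simp [hμ₀.le]) ?_
  have hq : q = μ⁻¹ • μ • q := (inv_smul_smul₀ hμ₀.ne' q).symm
  rw [mem_ball, sub_sub_cancel, hq, dist_smul₀, Real.norm_of_nonneg (inv_nonneg.2 hμ₀.le),
    inv_mul_lt_iff₀ hμ₀]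
  calc dist (μ • q) z < (μ - 1) * r := hdist
    _ = μ * ((1 - μ⁻¹) * r) := by field_simp

theorem MemSrR.zero_mem {E : Set 𝔼} (hE : MemSrR n r R E) (hr : 0 < r) : (0 : 𝔼) ∈ E :=
  hE.1 (mem_ball_self hr)

theorem MemSrR.norm_le {E : Set 𝔼} (hE : MemSrR n r R E) {x : 𝔼} (hx : x ∈ E) : ‖x‖ ≤ R :=
  mem_closedBall_zero_iff.1 (hE.2.1 hx)

theorem MemSrR.ne_univ [Nontrivial 𝔼] {E : Set 𝔼} (hE : MemSrR n r R E) : E ≠ univ :=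
  fun h => NormedSpace.unbounded_univ ℝ 𝔼 (h ▸ isBounded_closedBall.subset hE.2.1)

theorem MemSrR.hausdorffEDist_ne_top {E F : Set 𝔼} (hE : MemSrR n r R E)
    (hF : MemSrR n r R F) (hr : 0 < r) : hausdorffEDist E F ≠ ⊤ :=
  hausdorffEDist_ne_top_of_nonempty_of_bounded ⟨0, hE.zero_mem hr⟩ ⟨0, hF.zero_mem hr⟩
    (isBounded_closedBall.subset hE.2.1) (isBounded_closedBall.subset hF.2.1)

theorem MemSrR.symmDiff_subset_closedBall {E F : Set 𝔼} (hE : MemSrR n r R E)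
    (hF : MemSrR n r R F) : symmDiff E F ⊆ closedBall 0 R :=
  union_subset (sdiff_subset.trans hE.2.1) (sdiff_subset.trans hF.2.1)

/-- If `x ∈ E \ F`, then for `μ - 1` slightly above `d_H(E, F) / r` the dilate `μ • x` leaves
`E`, so the segment from `x` to `μ • x`, of length `(μ - 1) ‖x‖`, crosses `∂E`. -/
theorem MemSrR.infDist_frontier_le_of_mem_diff {E F : Set 𝔼} (hE : MemSrR n r R E)
    (hF : MemSrR n r R F) (hr : 0 < r) (hR : 0 < R) {x : 𝔼} (hx : x ∈ E \ F) :
    infDist x (frontier E) ≤ R / r * hausdorffDist E F := by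
  refine le_of_forall_gt_imp_ge_of_dense fun c hc => ?_
  have hc₀ : 0 < c := (mul_nonneg (div_nonneg hR.le hr.le) hausdorffDist_nonneg).trans_lt hc
  have hμx : (1 + c / R) • x ∉ E := by
    intro hμx
    have hlt : infDist ((1 + c / R) • x) F < (1 + c / R - 1) * r :=
      calc infDist ((1 + c / R) • x) F ≤ hausdorffDist E F :=
            infDist_le_hausdorffDist_of_mem hμx (hE.hausdorffEDist_ne_top hF hr)
        _ < (1 + c / R - 1) * r := by
            rw [div_mul_eq_mul_div, div_lt_iff₀ hr] at hc
            rw [add_sub_cancel_left, div_mul_eq_mul_div, lt_div_iff₀ hR]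
            linarith
    obtain ⟨z, hz, hdist⟩ := (infDist_lt_iff ⟨0, hF.zero_mem hr⟩).1 hlt
    exact hx.2 (hF.2.2.mem_of_dist_smul_lt hz (by simp [hc₀, hR]) hdist)
  calc infDist x (frontier E) ≤ dist x ((1 + c / R) • x) := infDist_frontier_le_dist hx.1 hμx
    _ = c / R * ‖x‖ := by
        rw [dist_eq_norm, show x - (1 + c / R) • x = (-(c / R)) • x by module, norm_smul,
          norm_neg, Real.norm_of_nonneg (by positivity)]
    _ ≤ c := by
        rw [div_mul_eq_mul_div, div_le_iff₀ hR]
        exact mul_le_mul_of_nonneg_left (hE.norm_le hx.1) hc₀.le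

theorem MemSrR.infDist_frontier_le_of_mem_symmDiff {E F : Set 𝔼} (hE : MemSrR n r R E)
    (hF : MemSrR n r R F) (hr : 0 < r) (hrR : r ≤ R) {x : 𝔼} (hx : x ∈ symmDiff E F) :
    infDist x (frontier E) ≤ R / r * hausdorffDist E F := by
  rcases hx with hx | hx
  · exact hE.infDist_frontier_le_of_mem_diff hF hr (hr.trans_le hrR) hx
  · calc infDist x (frontier E) ≤ infDist x E := infDist_frontier_le_infDist hx.2
      _ ≤ hausdorffDist F E :=
          infDist_le_hausdorffDist_of_mem hx.1 (hF.hausdorffEDist_ne_top hE hr)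
      _ = 1 * hausdorffDist E F := by rw [one_mul, hausdorffDist_comm]
      _ ≤ R / r * hausdorffDist E F :=
          mul_le_mul_of_nonneg_right ((one_le_div hr).2 hrR) hausdorffDist_nonneg

theorem MemSrR.setIntegral_infDist_frontier_le {E F : Set 𝔼} (hE : MemSrR n r R E)
    (hF : MemSrR n r R F) (hr : 0 < r) (hrR : r ≤ R) :
    ∫ x in symmDiff E F, infDist x (frontier E) ≤
      R / r * hausdorffDist E F * volume.real (closedBall (0 : 𝔼) R) := by
  have hsub := hE.symmDiff_subset_closedBall hF
  calc ∫ x in symmDiff E F, infDist x (frontier E)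
      ≤ ‖∫ x in symmDiff E F, infDist x (frontier E)‖ := Real.le_norm_self _
    _ ≤ R / r * hausdorffDist E F * volume.real (symmDiff E F) :=
        norm_setIntegral_le_of_norm_le_const (measure_mono hsub |>.trans_lt
          measure_closedBall_lt_top) fun x hx => by
            rw [Real.norm_of_nonneg infDist_nonneg]
            exact hE.infDist_frontier_le_of_mem_symmDiff hF hr hrR hx
    _ ≤ R / r * hausdorffDist E F * volume.real (closedBall (0 : 𝔼) R) :=
        mul_le_mul_of_nonneg_left (measureReal_mono hsub measure_closedBall_lt_top.ne)
          (mul_nonneg (div_nonneg (hr.trans_le hrR).le hr.le) hausdorffDist_nonneg)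

theorem MemSrR.ball_smul_subset_diff {E F : Set 𝔼} (hE : MemSrR n r R E) {x : 𝔼} (hx : x ∈ E)
    {t : ℝ} (ht₀ : 0 < t) (ht₁ : t ≤ 1) (hfar : t * (r + R) ≤ infDist x F) :
    ball ((1 - t) • x) (t * r) ⊆ E \ F := by
  intro y hy
  refine ⟨hE.2.2.ball_smul_subset hx ht₀ ht₁ hy, fun hyF => ?_⟩
  have hxz : dist ((1 - t) • x) x = t * ‖x‖ := by
    rw [dist_eq_norm, show (1 - t) • x - x = (-t) • x by module, norm_smul, norm_neg,
      Real.norm_of_nonneg ht₀.le]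
  have hxy : dist x y < t * (r + R) :=
    calc dist x y ≤ dist y ((1 - t) • x) + dist ((1 - t) • x) x := by
          rw [dist_comm]; exact dist_triangle _ _ _
      _ < t * r + t * ‖x‖ := by rw [hxz]; exact add_lt_add_of_lt_of_le hy le_rfl
      _ ≤ t * (r + R) := by rw [mul_add]; gcongr; exact hE.norm_le hx
  exact (infDist_le_dist_of_mem hyF).trans_lt hxy |>.not_ge hfar

/-- The ball is the inner half of a cone ball `ball ((1 - t) • x) (t * r)` around a point `x`
of one set lying at distance at least `t (r + R)` from the other. -/
theorem MemSrR.exists_ball_subset_symmDiff [Nontrivial 𝔼] {E F : Set 𝔼} (hE : MemSrR n r R E)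
    (hF : MemSrR n r R F) (hr : 0 < r) (hrR : r ≤ R) {t : ℝ} (ht₀ : 0 < t) (ht₁ : t ≤ 1)
    (hH : t * (r + R) < hausdorffDist E F) :
    ∃ z, ball z (t * r / 2) ⊆ symmDiff E F ∧
      ∀ y ∈ ball z (t * r / 2), t * r / 2 ≤ infDist y (frontier E) := by
  have hρ : 0 < t * r / 2 := by positivity
  have hfar : (∃ x ∈ E, t * (r + R) ≤ infDist x F) ∨ ∃ x ∈ F, t * (r + R) ≤ infDist x E := by
    by_contra! h
    exact hH.not_ge (hausdorffDist_le_of_infDist (by nlinarith)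
      (fun x hx => (h.1 x hx).le) fun x hx => (h.2 x hx).le)
  obtain ⟨z, hz⟩ : ∃ z, ball z (t * r) ⊆ E \ F ∨ ball z (t * r) ⊆ F \ E := by
    rcases hfar with ⟨x, hx, hxF⟩ | ⟨x, hx, hxE⟩
    · exact ⟨_, .inl (hE.ball_smul_subset_diff hx ht₀ ht₁ hxF)⟩
    · exact ⟨_, .inr (hF.ball_smul_subset_diff hx ht₀ ht₁ hxE)⟩
  have hzρ : ball z (t * r / 2) ⊆ ball z (t * r) := ball_subset_ball (by linarith)
  refine ⟨z, hzρ.trans ?_, fun y hy => ?_⟩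
  · rcases hz with h | h
    · exact h.trans subset_union_left
    · exact h.trans subset_union_right
  have hyρ : ball y (t * r / 2) ⊆ ball z (t * r) :=
    ball_subset_ball' (by rw [mem_ball] at hy; linarith)
  rcases hz with h | h
  · exact le_infDist_frontier_of_ball_subset hρ (hyρ.trans (h.trans sdiff_subset)) hE.ne_univ
  · rw [← frontier_compl]
    exact le_infDist_frontier_of_ball_subset hρ (hyρ.trans fun _ hy => (h hy).2)
      (compl_ne_univ.2 ⟨0, hE.zero_mem hr⟩)

theorem MemSrR.le_setIntegral_infDist_frontier [Nontrivial 𝔼] {E F : Set 𝔼}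
    (hE : MemSrR n r R E) (hF : MemSrR n r R F) (hr : 0 < r) (hrR : r ≤ R) {t : ℝ}
    (ht₀ : 0 < t) (ht₁ : t ≤ 1) (hH : t * (r + R) < hausdorffDist E F) :
    t * r / 2 * volume.real (ball (0 : 𝔼) (t * r / 2)) ≤
      ∫ x in symmDiff E F, infDist x (frontier E) := by
  obtain ⟨z, hsub, hlow⟩ := hE.exists_ball_subset_symmDiff hF hr hrR ht₀ ht₁ hH
  have hint : IntegrableOn (fun x => infDist x (frontier E)) (symmDiff E F) :=
    ((continuous_infDist_pt _).continuousOn.integrableOn_compact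
      (isCompact_closedBall 0 R)).mono_set (hE.symmDiff_subset_closedBall hF)
  exact le_setIntegral_of_ball_subset hint (fun _ => infDist_nonneg) hsub hlow

theorem exists_pos_hausdorffDist_lt_of_setIntegral_lt [Nontrivial 𝔼] (hr : 0 < r)
    (hrR : r ≤ R) {ε : ℝ} (hε : 0 < ε) :
    ∃ m > 0, ∀ {E F : Set 𝔼}, MemSrR n r R E → MemSrR n r R F →
      ∫ x in symmDiff E F, infDist x (frontier E) < m → hausdorffDist E F < ε := by
  set t := min 1 (ε / (2 * (r + R)))
  have hrR₀ : 0 < r + R := by linarith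
  have ht₀ : 0 < t := lt_min one_pos (by positivity)
  have htε : t * (r + R) < ε :=
    calc t * (r + R) ≤ ε / (2 * (r + R)) * (r + R) :=
          mul_le_mul_of_nonneg_right (min_le_right _ _) hrR₀.le
      _ = ε / 2 := by field_simp
      _ < ε := half_lt_self hε
  refine ⟨t * r / 2 * volume.real (ball (0 : 𝔼) (t * r / 2)), mul_pos (by positivity)
    (ENNReal.toReal_pos (measure_ball_pos _ _ (by positivity)).ne' measure_ball_lt_top.ne),
    fun hE hF hint => ?_⟩
  by_contra! hεH
  exact (hE.le_setIntegral_infDist_frontier hF hr hrR ht₀ (min_le_left _ _)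
    (htε.trans_le hεH)).not_gt hint

end StarShaped

theorem dtil_tendsto_iff_hausdorff_general (n : ℕ) (r R : ℝ) (hr : 0 < r) (hrR : r < R)
    (F : ℕ → Set (EuclideanSpace ℝ (Fin n))) (Flim : Set (EuclideanSpace ℝ (Fin n)))
    (hmem : ∀ k, MemSrR n r R (F k)) (hmemlim : MemSrR n r R Flim) :
    Tendsto (fun k => dtil n (F k) Flim) atTop (nhds 0) ↔
      Tendsto (fun k => hausdorffDist (F k) Flim) atTop (nhds 0) := by
  rcases subsingleton_or_nontrivial (EuclideanSpace ℝ (Fin n)) with _ | _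
  · have hF : ∀ k, F k = Flim := fun k => by
      rw [Subsingleton.eq_univ_of_nonempty ⟨0, (hmem k).zero_mem hr⟩,
        Subsingleton.eq_univ_of_nonempty ⟨0, hmemlim.zero_mem hr⟩]
    simp [hF, dtil]
  constructor
  · intro hdtil
    refine tendsto_order.2 ⟨fun a ha => .of_forall fun k => ha.trans_le hausdorffDist_nonneg,
      fun ε hε => ?_⟩
    obtain ⟨m, hm, hH⟩ := exists_pos_hausdorffDist_lt_of_setIntegral_lt (n := n) hr hrR.le hε
    filter_upwards [hdtil.eventually (gt_mem_nhds (Real.sqrt_pos.2 hm))] with k hk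
    exact hH (hmem k) hmemlim
      ((Real.sqrt_lt_sqrt_iff (integral_nonneg fun _ => infDist_nonneg)).1 hk)
  · intro hH
    refine squeeze_zero (fun k => Real.sqrt_nonneg _) (fun k => Real.sqrt_le_sqrt
      ((hmem k).setIntegral_infDist_frontier_le hmemlim hr hrR.le)) ?_
    simpa using ((hH.const_mul (R / r)).mul_const
      (volume.real (closedBall (0 : EuclideanSpace ℝ (Fin n)) R))).sqrt

/-- For compact sets `F_k, F_∞ ∈ S_{r,R}`, convergence `d̃(F_k,F_∞) → 0` holds
if and only if `F_k → F_∞` in the Hausdorff metric. -/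
theorem dtil_tendsto_iff_hausdorff (n : ℕ) (r R : ℝ) (hr : 0 < r) (hrR : r < R)
    (F : ℕ → Set (EuclideanSpace ℝ (Fin n))) (Flim : Set (EuclideanSpace ℝ (Fin n)))
    (hcomp : ∀ k, IsCompact (F k)) (hcomplim : IsCompact Flim)
    (hmem : ∀ k, MemSrR n r R (F k)) (hmemlim : MemSrR n r R Flim) :
    Tendsto (fun k => dtil n (F k) Flim) atTop (nhds 0) ↔
      Tendsto (fun k => hausdorffDist (F k) Flim) atTop (nhds 0) :=
  dtil_tendsto_iff_hausdorff_general n r R hr hrR F Flim hmem hmemlim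
end

section
/- For sets F₁, …, F_{k+1} ∈ S_{r,R}, the pseudo-distance d̃(E,F) = (∫_{E△F} dist(x,∂E) dx)^{1/2} satisfies the triangle-like inequality d̃²(F_{k+1}, F₁)/k ≤ C Σ_{j=1}^{k} d̃²(F_{j+1}, F_j), where the constant C depends only on r, R, and the dimension n. -/
open Metric MeasureTheory

/-!
Every `Ω ∈ S_{r,R}` is the region below the graph of its radial function `u_Ω` on the unit
sphere; `u_Ω` takes values in `[r, R]` and is Lipschitz because `Ω` is star-shaped with respect
to `B_r`. For `t ≥ 0` the distance from `t θ` to `∂Ω` is comparable to `|t - u_Ω(θ)|`, and up to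
endpoints `E △ F` consists of the points `t θ` with `t` between `u_E(θ)` and `u_F(θ)`.
Integrating in polar coordinates therefore makes `d̃²(E, F)` comparable to
`∫ (u_E - u_F)² dσ`, with constants depending only on `r`, `R` and `n`. For this squared `L²`
distance the chain inequality is `(∑ a_j)² ≤ k ∑ a_j²` applied to the telescoping sum
`u_{F_k} - u_{F_0} = ∑ (u_{F_{j+1}} - u_{F_j})`.
-/

open Set Filter Topology Measure
open scoped ENNReal

variable {V : Type*} [NormedAddCommGroup V] [NormedSpace ℝ V]

/-- The class `S_{r,R}`, in an arbitrary real normed space. -/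
structure IsStarDomain (r R : ℝ) (Ω : Set V) : Prop where
  ball_subset : ball 0 r ⊆ Ω
  subset_closedBall : Ω ⊆ closedBall 0 R
  segment_subset : ∀ y ∈ ball (0 : V) r, ∀ x ∈ Ω, segment ℝ y x ⊆ Ω

theorem MemSrR.isStarDomain {n : ℕ} {r R : ℝ} {Ω : Set (EuclideanSpace ℝ (Fin n))}
    (h : MemSrR n r R Ω) : IsStarDomain r R Ω :=
  ⟨h.1, h.2.1, h.2.2⟩

noncomputable def radialFun (Ω : Set V) (θ : sphere (0 : V) 1) : ℝ :=
  sSup {t : ℝ | 0 ≤ t ∧ t • (θ : V) ∈ Ω}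

theorem norm_smul_coe_sphere (t : ℝ) (θ : sphere (0 : V) 1) : ‖t • (θ : V)‖ = |t| := by
  rw [norm_smul, norm_eq_of_mem_sphere, mul_one, Real.norm_eq_abs]

namespace IsStarDomain

variable {r R : ℝ} {Ω E F : Set V}

theorem zero_mem (hΩ : IsStarDomain r R Ω) (hr : 0 < r) : (0 : V) ∈ Ω :=
  hΩ.ball_subset (mem_ball_self hr)

/-- `Ω` contains the homothetic copy `(1 - c) x + c B_r` of the inner ball. -/
theorem mem_of_norm_sub_smul_lt (hΩ : IsStarDomain r R Ω) {x w : V} (hx : x ∈ Ω) {c : ℝ}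
    (hc₀ : 0 < c) (hc₁ : c ≤ 1) (hw : ‖w - (1 - c) • x‖ < c * r) : w ∈ Ω := by
  set y := c⁻¹ • (w - (1 - c) • x)
  have hy : y ∈ ball (0 : V) r := by
    rw [mem_ball_zero_iff, norm_smul, norm_inv, Real.norm_of_nonneg hc₀.le,
      inv_mul_lt_iff₀ hc₀]
    exact hw
  refine hΩ.segment_subset y hy x hx ⟨c, 1 - c, hc₀.le, by linarith, by ring, ?_⟩
  rw [smul_inv_smul₀ hc₀.ne', sub_add_cancel]

theorem le_of_smul_mem (hΩ : IsStarDomain r R Ω) {θ : sphere (0 : V) 1} {t : ℝ} (ht : 0 ≤ t)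
    (htΩ : t • (θ : V) ∈ Ω) : t ≤ R := by
  simpa [norm_smul_coe_sphere, abs_of_nonneg ht] using hΩ.subset_closedBall htΩ

theorem bddAbove_radialSet (hΩ : IsStarDomain r R Ω) (θ : sphere (0 : V) 1) :
    BddAbove {t : ℝ | 0 ≤ t ∧ t • (θ : V) ∈ Ω} :=
  ⟨R, fun _ ⟨ht, htΩ⟩ => hΩ.le_of_smul_mem ht htΩ⟩

theorem nonempty_radialSet (hΩ : IsStarDomain r R Ω) (hr : 0 < r) (θ : sphere (0 : V) 1) :
    {t : ℝ | 0 ≤ t ∧ t • (θ : V) ∈ Ω}.Nonempty :=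
  ⟨0, le_rfl, by simpa using hΩ.zero_mem hr⟩

theorem outer_nonneg (hΩ : IsStarDomain r R Ω) (hr : 0 < r) : 0 ≤ R := by
  simpa using hΩ.subset_closedBall (hΩ.zero_mem hr)

theorem le_radialFun (hΩ : IsStarDomain r R Ω) {θ : sphere (0 : V) 1} {t : ℝ} (ht : 0 ≤ t)
    (htΩ : t • (θ : V) ∈ Ω) : t ≤ radialFun Ω θ :=
  le_csSup (hΩ.bddAbove_radialSet θ) ⟨ht, htΩ⟩

theorem radialFun_le (hΩ : IsStarDomain r R Ω) (hr : 0 < r) (θ : sphere (0 : V) 1) :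
    radialFun Ω θ ≤ R :=
  csSup_le (hΩ.nonempty_radialSet hr θ) fun _ ⟨ht, htΩ⟩ => hΩ.le_of_smul_mem ht htΩ

theorem le_radialFun_of_lt_radius (hΩ : IsStarDomain r R Ω) {θ : sphere (0 : V) 1} {t : ℝ}
    (ht : 0 ≤ t) (htr : t < r) : t ≤ radialFun Ω θ :=
  hΩ.le_radialFun ht <| hΩ.ball_subset <| by
    rwa [mem_ball_zero_iff, norm_smul_coe_sphere, abs_of_nonneg ht]

theorem radius_le_radialFun (hΩ : IsStarDomain r R Ω) (hr : 0 < r) (θ : sphere (0 : V) 1) :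
    r ≤ radialFun Ω θ :=
  le_of_forall_lt_imp_le_of_dense fun t ht =>
    (le_max_left t 0).trans (hΩ.le_radialFun_of_lt_radius (le_max_right t 0) (max_lt ht hr))

theorem ball_subset_of_smul_mem (hΩ : IsStarDomain r R Ω) {θ : sphere (0 : V) 1} {s t : ℝ}
    (ht : 0 ≤ t) (hts : t < s) (hsΩ : s • (θ : V) ∈ Ω) :
    ball (t • (θ : V)) ((s - t) / s * r) ⊆ Ω := by
  have hs : 0 < s := ht.trans_lt hts
  intro y hy
  refine hΩ.mem_of_norm_sub_smul_lt hsΩ (div_pos (sub_pos.2 hts) hs)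
    ((div_le_one hs).2 (by linarith)) ?_
  rwa [smul_smul, one_sub_div hs.ne', sub_sub_cancel, div_mul_cancel₀ _ hs.ne', ← dist_eq_norm]

theorem smul_mem_of_lt_radialFun (hΩ : IsStarDomain r R Ω) (hr : 0 < r) {θ : sphere (0 : V) 1}
    {t : ℝ} (ht : 0 ≤ t) (htu : t < radialFun Ω θ) : t • (θ : V) ∈ Ω := by
  obtain ⟨s, ⟨-, hsΩ⟩, hts⟩ := exists_lt_of_lt_csSup (hΩ.nonempty_radialSet hr θ) htu
  have hs : 0 < s := ht.trans_lt hts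
  have hgap : 0 < s - t := sub_pos.2 hts
  exact hΩ.ball_subset_of_smul_mem ht hts hsΩ (mem_ball_self (by positivity))

theorem radialFun_le_add (hΩ : IsStarDomain r R Ω) (hr : 0 < r) (θ θ' : sphere (0 : V) 1) :
    radialFun Ω θ ≤ radialFun Ω θ' + 2 * R ^ 2 / r * dist θ θ' := by
  set d := dist θ θ'
  have hd : 0 ≤ d := dist_nonneg
  have hu' : r ≤ radialFun Ω θ' := hΩ.radius_le_radialFun hr θ'
  have huR' : radialFun Ω θ' ≤ R := hΩ.radialFun_le hr θ'
  have hslack : 0 ≤ 2 * R ^ 2 / r * d := by positivity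
  refine csSup_le (hΩ.nonempty_radialSet hr θ) fun t ⟨ht, htΩ⟩ => ?_
  have htR : t ≤ R := hΩ.le_of_smul_mem ht htΩ
  rcases (mul_nonneg ht hd).eq_or_lt with htd | htd
  · rcases mul_eq_zero.1 htd.symm with rfl | hd0
    · linarith
    · obtain rfl : θ = θ' := dist_eq_zero.1 hd0
      linarith [hΩ.le_radialFun ht htΩ]
  -- Shrinking `t • θ` by the factor `r / (r + 2 t d)` towards a suitable point of the inner
  -- ball lands on the ray through `θ'`.
  set c := 2 * t * d / (r + 2 * t * d)
  have hden : 0 < r + 2 * t * d := by positivity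
  have hc₀ : 0 < c := div_pos (by linarith) hden
  have hc₁ : c ≤ 1 := (div_le_one hden).2 (by linarith)
  have hcompl : 1 - c = r / (r + 2 * t * d) := by
    rw [eq_div_iff hden.ne', sub_mul, one_mul, div_mul_cancel₀ _ hden.ne']; ring
  have hmem : ((1 - c) * t) • (θ' : V) ∈ Ω := by
    refine hΩ.mem_of_norm_sub_smul_lt htΩ hc₀ hc₁ ?_
    rw [smul_smul, ← smul_sub, norm_smul, Real.norm_of_nonneg (by rw [hcompl]; positivity),
      ← dist_eq_norm, ← Subtype.dist_eq, dist_comm, hcompl]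
    simp only [c, div_mul_eq_mul_div]
    rw [div_lt_div_iff_of_pos_right hden]
    nlinarith
  have hshrunk := hΩ.le_radialFun (by rw [hcompl]; positivity) hmem
  rw [hcompl, div_mul_eq_mul_div, div_le_iff₀ hden] at hshrunk
  rw [← sub_le_iff_le_add', div_mul_eq_mul_div, le_div_iff₀ hr]
  nlinarith [mul_le_mul htR huR' (by linarith) (by linarith)]

theorem lipschitzWith_radialFun (hΩ : IsStarDomain r R Ω) (hr : 0 < r) :
    LipschitzWith (2 * R ^ 2 / r).toNNReal (radialFun Ω) :=
  LipschitzWith.of_le_add_mul' _ (hΩ.radialFun_le_add hr)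

theorem continuous_radialFun (hΩ : IsStarDomain r R Ω) (hr : 0 < r) :
    Continuous (radialFun Ω) :=
  (hΩ.lipschitzWith_radialFun hr).continuous

theorem smul_radialFun_mem_frontier (hΩ : IsStarDomain r R Ω) (hr : 0 < r)
    (θ : sphere (0 : V) 1) : radialFun Ω θ • (θ : V) ∈ frontier Ω := by
  set u := radialFun Ω θ
  have hu : 0 < u := hr.trans_le (hΩ.radius_le_radialFun hr θ)
  have hlim : Tendsto (fun s : ℝ => s • (θ : V)) (𝓝 u) (𝓝 (u • (θ : V))) :=
    (continuous_id.smul continuous_const).tendsto u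
  rw [frontier_eq_closure_inter_closure]
  refine ⟨mem_closure_of_tendsto (hlim.mono_left (nhdsWithin_le_nhds (s := Iio u))) ?_,
    mem_closure_of_tendsto (hlim.mono_left (nhdsWithin_le_nhds (s := Ioi u))) ?_⟩
  · filter_upwards [Ioo_mem_nhdsLT hu] with s hs
    exact hΩ.smul_mem_of_lt_radialFun hr hs.1.le hs.2
  · refine eventually_nhdsWithin_of_forall fun s (hs : u < s) hsΩ => ?_
    exact hs.not_ge (hΩ.le_radialFun (hu.trans hs).le hsΩ)

theorem infDist_smul_frontier_le (hΩ : IsStarDomain r R Ω) (hr : 0 < r) (θ : sphere (0 : V) 1)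
    (t : ℝ) :
    infDist (t • (θ : V)) (frontier Ω) ≤ |t - radialFun Ω θ| := by
  calc infDist (t • (θ : V)) (frontier Ω)
      ≤ dist (t • (θ : V)) (radialFun Ω θ • (θ : V)) :=
        infDist_le_dist_of_mem (hΩ.smul_radialFun_mem_frontier hr θ)
    _ = |t - radialFun Ω θ| := by rw [dist_eq_norm, ← sub_smul, norm_smul_coe_sphere]

theorem ball_subset_of_lt_radialFun (hΩ : IsStarDomain r R Ω) (hr : 0 < r)
    {θ : sphere (0 : V) 1} {t : ℝ} (ht : 0 ≤ t) (htu : t < radialFun Ω θ) :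
    ball (t • (θ : V)) (r / R * (radialFun Ω θ - t)) ⊆ Ω := by
  have huR := hΩ.radialFun_le hr θ
  have hR : 0 < R := by linarith [hΩ.radius_le_radialFun hr θ]
  intro y hy
  rw [mem_ball, div_mul_eq_mul_div, lt_div_iff₀ hR] at hy
  obtain ⟨s, hts, hsu⟩ : ∃ s, t + dist y (t • (θ : V)) * R / r < s ∧ s < radialFun Ω θ :=
    exists_between (by rw [← lt_sub_iff_add_lt', div_lt_iff₀ hr]; linarith)
  have hgap : dist y (t • (θ : V)) * R / r < s - t := by linarith
  have hts' : t < s := by linarith [show 0 ≤ dist y (t • (θ : V)) * R / r by positivity]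
  refine hΩ.ball_subset_of_smul_mem ht hts'
    (hΩ.smul_mem_of_lt_radialFun hr (ht.trans hts'.le) hsu) ?_
  rw [mem_ball, div_mul_eq_mul_div, lt_div_iff₀ (ht.trans_lt hts')]
  rw [div_lt_iff₀ hr] at hgap
  nlinarith [dist_nonneg (x := y) (y := t • (θ : V))]

theorem disjoint_ball_of_radialFun_lt (hΩ : IsStarDomain r R Ω) (hr : 0 < r)
    {θ : sphere (0 : V) 1} {t : ℝ} (hut : radialFun Ω θ < t) (htR : t ≤ R) :
    Disjoint (ball (t • (θ : V)) (r / (2 * R) * (t - radialFun Ω θ))) Ω := by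
  set u := radialFun Ω θ
  have hu : 0 < u := hr.trans_le (hΩ.radius_le_radialFun hr θ)
  have ht : 0 < t := hu.trans hut
  rw [Set.disjoint_left]
  intro y hy hyΩ
  -- Pulling `y` towards the inner ball by the factor `1 - (t - u) / (2 t)` would put
  -- the point `(t + u) / 2 • θ`, beyond the boundary, into `Ω`.
  have hc₀ : 0 < (t - u) / (2 * t) := div_pos (sub_pos.2 hut) (by positivity)
  have hc₁ : (t - u) / (2 * t) ≤ 1 := (div_le_one (by positivity)).2 (by linarith)
  have hcompl : 1 - (t - u) / (2 * t) = (t + u) / (2 * t) := by field_simp; ring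
  have hmem : ((t + u) / 2) • (θ : V) ∈ Ω := by
    refine hΩ.mem_of_norm_sub_smul_lt hyΩ hc₀ hc₁ ?_
    have hshift : ((t + u) / 2) • (θ : V) - (1 - (t - u) / (2 * t)) • y
        = (1 - (t - u) / (2 * t)) • (t • (θ : V) - y) := by
      rw [smul_sub, smul_smul, hcompl]; congr 2; field_simp
    calc ‖((t + u) / 2) • (θ : V) - (1 - (t - u) / (2 * t)) • y‖
        = (1 - (t - u) / (2 * t)) * dist y (t • (θ : V)) := by
          rw [hshift, norm_smul, Real.norm_of_nonneg (by linarith), dist_eq_norm', norm_sub_rev]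
      _ ≤ dist y (t • (θ : V)) := mul_le_of_le_one_left dist_nonneg (by linarith)
      _ < r / (2 * R) * (t - u) := hy
      _ ≤ (t - u) / (2 * t) * r := by
        rw [div_mul_eq_mul_div, div_mul_eq_mul_div, mul_comm r]
        have := sub_pos.2 hut
        gcongr
  exact (show u < (t + u) / 2 by linarith).not_ge (hΩ.le_radialFun (by linarith) hmem)

theorem le_infDist_smul_frontier (hΩ : IsStarDomain r R Ω) (hr : 0 < r) {θ : sphere (0 : V) 1}
    {t : ℝ} (ht : 0 ≤ t) (htR : t ≤ R) :
    r / (2 * R) * |t - radialFun Ω θ| ≤ infDist (t • (θ : V)) (frontier Ω) := by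
  have hR : 0 < R := by linarith [hΩ.radius_le_radialFun hr θ, hΩ.radialFun_le hr θ]
  rw [le_infDist ⟨_, hΩ.smul_radialFun_mem_frontier hr θ⟩]
  intro y hy
  by_contra! hlt
  rw [dist_comm] at hlt
  rcases lt_trichotomy t (radialFun Ω θ) with htu | htu | htu
  · refine hy.2 (interior_maximal (hΩ.ball_subset_of_lt_radialFun hr ht htu) isOpen_ball ?_)
    rw [abs_of_neg (sub_neg.2 htu)] at hlt
    rw [mem_ball]
    calc dist y (t • (θ : V)) < r / (2 * R) * -(t - radialFun Ω θ) := hlt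
      _ ≤ r / R * (radialFun Ω θ - t) := by
        rw [neg_sub]; gcongr; linarith
  · rw [htu, sub_self, abs_zero, mul_zero] at hlt
    exact (dist_nonneg.trans_lt hlt).false
  · rw [abs_of_pos (sub_pos.2 htu)] at hlt
    exact ((hΩ.disjoint_ball_of_radialFun_lt hr htu htR).closure_right
      isOpen_ball).notMem_of_mem_left hlt hy.1

theorem mem_uIcc_of_smul_mem_symmDiff (hE : IsStarDomain r R E) (hF : IsStarDomain r R F)
    (hr : 0 < r) {θ : sphere (0 : V) 1} {t : ℝ} (ht : 0 ≤ t) (h : t • (θ : V) ∈ symmDiff E F) :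
    t ∈ uIcc (radialFun E θ) (radialFun F θ) := by
  rcases h with ⟨htE, htF⟩ | ⟨htF, htE⟩
  · exact Icc_subset_uIcc'
      ⟨not_lt.1 (htF ∘ hF.smul_mem_of_lt_radialFun hr ht), hE.le_radialFun ht htE⟩
  · exact Icc_subset_uIcc
      ⟨not_lt.1 (htE ∘ hE.smul_mem_of_lt_radialFun hr ht), hF.le_radialFun ht htF⟩

theorem smul_mem_symmDiff_of_mem_uIoo (hE : IsStarDomain r R E) (hF : IsStarDomain r R F)
    (hr : 0 < r) {θ : sphere (0 : V) 1} {t : ℝ} (h : t ∈ uIoo (radialFun E θ) (radialFun F θ)) :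
    t • (θ : V) ∈ symmDiff E F := by
  have ht : 0 ≤ t :=
    hr.le.trans ((le_inf (hE.radius_le_radialFun hr θ) (hF.radius_le_radialFun hr θ)).trans h.1.le)
  rcases le_total (radialFun E θ) (radialFun F θ) with hEF | hFE
  · rw [uIoo_of_le hEF] at h
    exact Or.inr
      ⟨hF.smul_mem_of_lt_radialFun hr ht h.2, fun htE => h.1.not_ge (hE.le_radialFun ht htE)⟩
  · rw [uIoo_of_ge hFE] at h
    exact Or.inl
      ⟨hE.smul_mem_of_lt_radialFun hr ht h.2, fun htF => h.1.not_ge (hF.le_radialFun ht htF)⟩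

theorem zero_notMem_symmDiff (hE : IsStarDomain r R E) (hF : IsStarDomain r R F) (hr : 0 < r) :
    (0 : V) ∉ symmDiff E F := fun h =>
  h.elim (fun h => h.2 (hF.zero_mem hr)) (fun h => h.2 (hE.zero_mem hr))

end IsStarDomain

theorem measurableSet_mem_uIcc {X : Type*} [MeasurableSpace X] {f g h : X → ℝ} (hf : Measurable f)
    (hg : Measurable g) (hh : Measurable h) : MeasurableSet {x | h x ∈ uIcc (f x) (g x)} :=
  (measurableSet_le (hf.min hg) hh).inter (measurableSet_le hh (hf.max hg))

theorem measurableSet_mem_uIoo {X : Type*} [MeasurableSpace X] {f g h : X → ℝ} (hf : Measurable f)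
    (hg : Measurable g) (hh : Measurable h) : MeasurableSet {x | h x ∈ uIoo (f x) (g x)} :=
  (measurableSet_lt (hf.min hg) hh).inter (measurableSet_lt hh (hf.max hg))

open Interval in
theorem lintegral_uIoc_abs_sub (a b : ℝ) :
    ∫⁻ t in Ι a b, ENNReal.ofReal |t - a| = ENNReal.ofReal ((b - a) ^ 2 / 2) := by
  rw [← ofReal_integral_eq_lintegral_ofReal]
  · have h := integral_pow_abs_sub_uIoc (a := a) (b := b) 1
    norm_num [sq_abs] at h
    rw [h]
  · exact (continuous_abs.comp (continuous_sub_right a)).integrableOn_uIoc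
  · exact ae_of_all _ fun t => abs_nonneg _

theorem lintegral_uIcc_abs_sub (a b : ℝ) :
    ∫⁻ t in uIcc a b, ENNReal.ofReal |t - a| = ENNReal.ofReal ((b - a) ^ 2 / 2) := by
  rw [← lintegral_uIoc_abs_sub]
  exact setLIntegral_congr Ioc_ae_eq_Icc.symm

theorem lintegral_uIoo_abs_sub (a b : ℝ) :
    ∫⁻ t in uIoo a b, ENNReal.ofReal |t - a| = ENNReal.ofReal ((b - a) ^ 2 / 2) := by
  rw [← lintegral_uIoc_abs_sub]
  exact setLIntegral_congr Ioo_ae_eq_Ioc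

theorem lintegral_volumeIoiPow (m : ℕ) {g : ℝ → ℝ≥0∞} (hg : Measurable g) :
    ∫⁻ t, g t ∂(volumeIoiPow m) = ∫⁻ t in Ioi 0, ENNReal.ofReal (t ^ m) * g t := by
  rw [volumeIoiPow, lintegral_withDensity_eq_lintegral_mul _ (g := fun t : Ioi (0 : ℝ) => g t)
    (measurable_subtype_coe.pow_const m).ennreal_ofReal (hg.comp measurable_subtype_coe)]
  exact lintegral_subtype_comap measurableSet_Ioi (fun t => ENNReal.ofReal (t ^ m) * g t)

theorem lintegral_volumeIoiPow_indicator_uIcc_le (m : ℕ) {a b R : ℝ} (ha : a ≤ R) (hb : b ≤ R) :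
    ∫⁻ t : Ioi (0 : ℝ), (uIcc a b).indicator (fun t => ENNReal.ofReal |t - a|) t ∂(volumeIoiPow m)
      ≤ ENNReal.ofReal (R ^ m) * ENNReal.ofReal ((b - a) ^ 2 / 2) := by
  set f := (uIcc a b).indicator fun t => ENNReal.ofReal |t - a|
  have hf : Measurable f :=
    (measurable_id.sub_const a).abs.ennreal_ofReal.indicator measurableSet_uIcc
  calc ∫⁻ t : Ioi (0 : ℝ), f t ∂(volumeIoiPow m)
      = ∫⁻ t in Ioi 0, ENNReal.ofReal (t ^ m) * f t := lintegral_volumeIoiPow m hf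
    _ ≤ ∫⁻ t in Ioi 0, ENNReal.ofReal (R ^ m) * f t := by
        refine setLIntegral_mono' measurableSet_Ioi fun t (ht : 0 < t) => ?_
        by_cases htab : t ∈ uIcc a b
        · gcongr
          exact htab.2.trans (max_le ha hb)
        · simp [f, htab]
    _ ≤ ∫⁻ t, ENNReal.ofReal (R ^ m) * f t := setLIntegral_le_lintegral _ _
    _ = ENNReal.ofReal (R ^ m) * ENNReal.ofReal ((b - a) ^ 2 / 2) := by
        rw [lintegral_const_mul' _ _ ENNReal.ofReal_ne_top, lintegral_indicator measurableSet_uIcc,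
          lintegral_uIcc_abs_sub]

theorem le_lintegral_volumeIoiPow_indicator_uIoo (m : ℕ) {a b r : ℝ} (hr : 0 ≤ r) (ha : r ≤ a)
    (hb : r ≤ b) :
    ENNReal.ofReal (r ^ m) * ENNReal.ofReal ((b - a) ^ 2 / 2)
      ≤ ∫⁻ t : Ioi (0 : ℝ), (uIoo a b).indicator (fun t => ENNReal.ofReal |t - a|) t
        ∂(volumeIoiPow m) := by
  set f := (uIoo a b).indicator fun t => ENNReal.ofReal |t - a|
  have hIoo : MeasurableSet (uIoo a b) := measurableSet_Ioo
  have hf : Measurable f := (measurable_id.sub_const a).abs.ennreal_ofReal.indicator hIoo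
  have hsupp : (fun t => ENNReal.ofReal (r ^ m) * f t).support ⊆ Ioi 0 := fun t ht =>
    hr.trans_lt ((le_inf ha hb).trans_lt (Set.support_indicator_subset
      (Function.support_mul_subset_right _ _ ht)).1)
  calc ENNReal.ofReal (r ^ m) * ENNReal.ofReal ((b - a) ^ 2 / 2)
      = ∫⁻ t, ENNReal.ofReal (r ^ m) * f t := by
        rw [lintegral_const_mul' _ _ ENNReal.ofReal_ne_top, lintegral_indicator hIoo,
          lintegral_uIoo_abs_sub]
    _ = ∫⁻ t in Ioi 0, ENNReal.ofReal (r ^ m) * f t :=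
        (setLIntegral_eq_of_support_subset hsupp).symm
    _ ≤ ∫⁻ t in Ioi 0, ENNReal.ofReal (t ^ m) * f t := by
        refine setLIntegral_mono' measurableSet_Ioi fun t _ => ?_
        by_cases htab : t ∈ uIoo a b
        · gcongr
          exact (le_inf ha hb).trans htab.1.le
        · simp [f, htab]
    _ = ∫⁻ t : Ioi (0 : ℝ), f t ∂(volumeIoiPow m) := (lintegral_volumeIoiPow m hf).symm

section Polar

variable [FiniteDimensional ℝ V] [MeasurableSpace V] [BorelSpace V] (μ : Measure V)
  [μ.IsAddHaarMeasure]

theorem measurePreserving_smul_sphere :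
    MeasurePreserving (fun p : sphere (0 : V) 1 × Ioi (0 : ℝ) => (p.2 : ℝ) • (p.1 : V))
      (μ.toSphere.prod (volumeIoiPow (Module.finrank ℝ V - 1))) (μ.restrict {0}ᶜ) :=
  (⟨measurable_subtype_coe, map_comap_subtype_coe (measurableSet_singleton 0).compl μ⟩ :
      MeasurePreserving Subtype.val (μ.comap Subtype.val) (μ.restrict {0}ᶜ)).comp
    (μ.measurePreserving_homeomorphUnitSphereProd.symm
      (homeomorphUnitSphereProd V).toMeasurableEquiv)

theorem measurableEmbedding_smul_sphere :
    MeasurableEmbedding fun p : sphere (0 : V) 1 × Ioi (0 : ℝ) => (p.2 : ℝ) • (p.1 : V) :=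
  (MeasurableEmbedding.subtype_coe (measurableSet_singleton 0).compl).comp
    (homeomorphUnitSphereProd V).symm.measurableEmbedding

theorem setLIntegral_eq_setLIntegral_polar {s : Set V} (hs : (0 : V) ∉ s) (f : V → ℝ≥0∞) :
    ∫⁻ x in s, f x ∂μ =
      ∫⁻ p in (fun p : sphere (0 : V) 1 × Ioi (0 : ℝ) => (p.2 : ℝ) • (p.1 : V)) ⁻¹' s,
        f ((p.2 : ℝ) • (p.1 : V)) ∂(μ.toSphere.prod (volumeIoiPow (Module.finrank ℝ V - 1))) := by
  rw [(measurePreserving_smul_sphere μ).setLIntegral_comp_preimage_emb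
    measurableEmbedding_smul_sphere, restrict_restrict' (measurableSet_singleton 0).compl,
    inter_eq_left.2 (subset_compl_singleton_iff.2 hs)]

end Polar

namespace IsStarDomain

variable [FiniteDimensional ℝ V] [MeasurableSpace V] [BorelSpace V] (μ : Measure V)
  [μ.IsAddHaarMeasure] {r R : ℝ} {E F : Set V}

theorem lintegral_symmDiff_infDist_le (hE : IsStarDomain r R E) (hF : IsStarDomain r R F)
    (hr : 0 < r) :
    ∫⁻ x in symmDiff E F, ENNReal.ofReal (infDist x (frontier E)) ∂μ ≤
      ENNReal.ofReal (R ^ (Module.finrank ℝ V - 1) / 2) *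
        ∫⁻ θ, ENNReal.ofReal ((radialFun E θ - radialFun F θ) ^ 2) ∂μ.toSphere := by
  set m := Module.finrank ℝ V - 1
  have hR : 0 ≤ R := hE.outer_nonneg hr
  have huE := hE.continuous_radialFun hr
  have huF := hF.continuous_radialFun hr
  set S := {p : sphere (0 : V) 1 × Ioi (0 : ℝ) |
    (p.2 : ℝ) ∈ uIcc (radialFun E p.1) (radialFun F p.1)}
  set G := S.indicator fun p => ENNReal.ofReal |(p.2 : ℝ) - radialFun E p.1|
  have hG : Measurable G := Measurable.indicator (by fun_prop)
    (measurableSet_mem_uIcc (by fun_prop) (by fun_prop) (by fun_prop))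
  rw [setLIntegral_eq_setLIntegral_polar μ (hE.zero_notMem_symmDiff hF hr)]
  calc _ ≤ ∫⁻ p in _, G p ∂_ := setLIntegral_mono hG fun p hp => by
          have hpS : p ∈ S := hE.mem_uIcc_of_smul_mem_symmDiff hF hr p.2.2.le hp
          exact (ENNReal.ofReal_le_ofReal (hE.infDist_smul_frontier_le hr p.1 p.2)).trans_eq
            (indicator_of_mem hpS fun p => ENNReal.ofReal |(p.2 : ℝ) - radialFun E p.1|).symm
    _ ≤ ∫⁻ p, G p ∂_ := setLIntegral_le_lintegral _ _
    _ = ∫⁻ θ, ∫⁻ t, G (θ, t) ∂(volumeIoiPow m) ∂μ.toSphere := lintegral_prod _ hG.aemeasurable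
    _ ≤ ∫⁻ θ, ENNReal.ofReal (R ^ m) *
          ENNReal.ofReal ((radialFun F θ - radialFun E θ) ^ 2 / 2) ∂μ.toSphere :=
        lintegral_mono fun θ =>
          lintegral_volumeIoiPow_indicator_uIcc_le m (hE.radialFun_le hr θ) (hF.radialFun_le hr θ)
    _ = _ := by
        rw [← lintegral_const_mul' _ _ ENNReal.ofReal_ne_top]
        refine lintegral_congr fun θ => ?_
        rw [← ENNReal.ofReal_mul (by positivity), ← ENNReal.ofReal_mul (by positivity)]
        ring_nf

theorem le_lintegral_symmDiff_infDist (hE : IsStarDomain r R E) (hF : IsStarDomain r R F)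
    (hr : 0 < r) :
    ENNReal.ofReal (r / (2 * R) * (r ^ (Module.finrank ℝ V - 1) / 2)) *
        ∫⁻ θ, ENNReal.ofReal ((radialFun E θ - radialFun F θ) ^ 2) ∂μ.toSphere ≤
      ∫⁻ x in symmDiff E F, ENNReal.ofReal (infDist x (frontier E)) ∂μ := by
  set m := Module.finrank ℝ V - 1
  have hR : 0 ≤ R := hE.outer_nonneg hr
  have huE := hE.continuous_radialFun hr
  have huF := hF.continuous_radialFun hr
  set S := {p : sphere (0 : V) 1 × Ioi (0 : ℝ) |
    (p.2 : ℝ) ∈ uIoo (radialFun E p.1) (radialFun F p.1)}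
  set G := fun p => ENNReal.ofReal (r / (2 * R)) *
    S.indicator (fun p => ENNReal.ofReal |(p.2 : ℝ) - radialFun E p.1|) p
  have hG : Measurable G := measurable_const.mul <| Measurable.indicator (by fun_prop)
    (measurableSet_mem_uIoo (by fun_prop) (by fun_prop) (by fun_prop))
  have hsupp : G.support ⊆ (fun p : sphere (0 : V) 1 × Ioi (0 : ℝ) => (p.2 : ℝ) • (p.1 : V)) ⁻¹'
      symmDiff E F := fun p hp => by
    simp only [G, Function.mem_support] at hp
    exact hE.smul_mem_symmDiff_of_mem_uIoo hF hr
      (show p ∈ S from mem_of_indicator_ne_zero (right_ne_zero_of_mul hp))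
  have hdist : Measurable fun p : sphere (0 : V) 1 × Ioi (0 : ℝ) =>
      ENNReal.ofReal (infDist ((p.2 : ℝ) • (p.1 : V)) (frontier E)) :=
    by fun_prop
  rw [setLIntegral_eq_setLIntegral_polar μ (hE.zero_notMem_symmDiff hF hr)]
  calc _ = ∫⁻ θ, ENNReal.ofReal (r / (2 * R)) * (ENNReal.ofReal (r ^ m) *
          ENNReal.ofReal ((radialFun F θ - radialFun E θ) ^ 2 / 2)) ∂μ.toSphere := by
        rw [← lintegral_const_mul' _ _ ENNReal.ofReal_ne_top]
        refine lintegral_congr fun θ => ?_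
        rw [← ENNReal.ofReal_mul (by positivity), ← ENNReal.ofReal_mul (by positivity),
          ← ENNReal.ofReal_mul (by positivity)]
        ring_nf
    _ ≤ ∫⁻ θ, ∫⁻ t, G (θ, t) ∂(volumeIoiPow m) ∂μ.toSphere :=
        lintegral_mono fun θ => by
          rw [lintegral_const_mul' _ _ ENNReal.ofReal_ne_top]
          gcongr
          exact le_lintegral_volumeIoiPow_indicator_uIoo m hr.le (hE.radius_le_radialFun hr θ)
            (hF.radius_le_radialFun hr θ)
    _ = ∫⁻ p, G p ∂_ := (lintegral_prod _ hG.aemeasurable).symm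
    _ = ∫⁻ p in _, G p ∂_ := (setLIntegral_eq_of_support_subset hsupp).symm
    _ ≤ _ := setLIntegral_mono hdist fun p _ => by
          by_cases hpS : p ∈ S
          · have htR : (p.2 : ℝ) ≤ R :=
              hpS.2.le.trans (max_le (hE.radialFun_le hr p.1) (hF.radialFun_le hr p.1))
            simp only [G, indicator_of_mem hpS]
            rw [← ENNReal.ofReal_mul (by positivity)]
            exact ENNReal.ofReal_le_ofReal (hE.le_infDist_smul_frontier hr p.2.2.le htR)
          · simp [G, hpS]

theorem integrable_sq_sub_radialFun (hE : IsStarDomain r R E) (hF : IsStarDomain r R F)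
    (hr : 0 < r) : Integrable (fun θ => (radialFun E θ - radialFun F θ) ^ 2) μ.toSphere :=
  integrableOn_univ.1 <| (((hE.continuous_radialFun hr).sub
    (hF.continuous_radialFun hr)).pow 2).continuousOn.integrableOn_compact isCompact_univ

theorem integral_symmDiff_infDist_le (hE : IsStarDomain r R E) (hF : IsStarDomain r R F)
    (hr : 0 < r) :
    ∫ x in symmDiff E F, infDist x (frontier E) ∂μ ≤
      R ^ (Module.finrank ℝ V - 1) / 2 * ∫ θ, (radialFun E θ - radialFun F θ) ^ 2 ∂μ.toSphere := by
  have hR : 0 ≤ R := hE.outer_nonneg hr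
  rw [integral_eq_lintegral_of_nonneg_ae (ae_of_all _ fun _ => infDist_nonneg)
    (continuous_infDist_pt _).aestronglyMeasurable]
  have hW : 0 ≤ ∫ θ, (radialFun E θ - radialFun F θ) ^ 2 ∂μ.toSphere :=
    integral_nonneg fun θ => sq_nonneg _
  refine ENNReal.toReal_le_of_le_ofReal (mul_nonneg (by positivity) hW) ?_
  rw [ENNReal.ofReal_mul (by positivity), ofReal_integral_eq_lintegral_ofReal
    (integrable_sq_sub_radialFun μ hE hF hr) (ae_of_all _ fun θ => sq_nonneg _)]
  exact lintegral_symmDiff_infDist_le μ hE hF hr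

theorem le_integral_symmDiff_infDist (hE : IsStarDomain r R E) (hF : IsStarDomain r R F)
    (hr : 0 < r) :
    r / (2 * R) * (r ^ (Module.finrank ℝ V - 1) / 2) *
        ∫ θ, (radialFun E θ - radialFun F θ) ^ 2 ∂μ.toSphere ≤
      ∫ x in symmDiff E F, infDist x (frontier E) ∂μ := by
  have hR : 0 ≤ R := hE.outer_nonneg hr
  have hW := ofReal_integral_eq_lintegral_ofReal (integrable_sq_sub_radialFun μ hE hF hr)
    (ae_of_all _ fun θ => sq_nonneg (radialFun E θ - radialFun F θ))
  have hfin : ∫⁻ x in symmDiff E F, ENNReal.ofReal (infDist x (frontier E)) ∂μ ≠ ⊤ :=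
    ((lintegral_symmDiff_infDist_le μ hE hF hr).trans_lt
      (by rw [← hW]; exact ENNReal.mul_lt_top ENNReal.ofReal_lt_top ENNReal.ofReal_lt_top)).ne
  rw [integral_eq_lintegral_of_nonneg_ae (ae_of_all _ fun _ => infDist_nonneg)
    (continuous_infDist_pt _).aestronglyMeasurable, ← ENNReal.ofReal_le_iff_le_toReal hfin,
    ENNReal.ofReal_mul (by positivity), hW]
  exact le_lintegral_symmDiff_infDist μ hE hF hr

end IsStarDomain

theorem integral_sq_sub_le_mul_sum {X : Type*} [MeasurableSpace X] {ν : Measure X}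
    (f : ℕ → X → ℝ) (k : ℕ) (hf : ∀ j < k, Integrable (fun x => (f (j + 1) x - f j x) ^ 2) ν) :
    ∫ x, (f k x - f 0 x) ^ 2 ∂ν ≤
      k * ∑ j ∈ Finset.range k, ∫ x, (f (j + 1) x - f j x) ^ 2 ∂ν := by
  have hsum : ∀ j ∈ Finset.range k, Integrable (fun x => (f (j + 1) x - f j x) ^ 2) ν :=
    fun j hj => hf j (Finset.mem_range.1 hj)
  have hpt : ∀ x, (f k x - f 0 x) ^ 2 ≤ k * ∑ j ∈ Finset.range k, (f (j + 1) x - f j x) ^ 2 :=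
    fun x => by
      rw [← Finset.sum_range_sub (fun j => f j x)]
      exact sq_sum_le_card_mul_sum_sq.trans_eq (by rw [Finset.card_range])
  calc ∫ x, (f k x - f 0 x) ^ 2 ∂ν
      ≤ ∫ x, k * ∑ j ∈ Finset.range k, (f (j + 1) x - f j x) ^ 2 ∂ν :=
        integral_mono_of_nonneg (ae_of_all _ fun x => sq_nonneg _)
          ((integrable_finsetSum _ hsum).const_mul _) (ae_of_all _ hpt)
    _ = k * ∑ j ∈ Finset.range k, ∫ x, (f (j + 1) x - f j x) ^ 2 ∂ν := by
        rw [integral_const_mul, integral_finsetSum _ hsum]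

theorem dtil_sq (n : ℕ) (E F : Set (EuclideanSpace ℝ (Fin n))) :
    dtil n E F ^ 2 = ∫ x in symmDiff E F, infDist x (frontier E) :=
  Real.sq_sqrt (integral_nonneg fun _ => infDist_nonneg)

/-- Triangle-like inequality for the pseudo-distance on `S_{r,R}`:
`d̃²(F_{k+1},F₁)/k ≤ C Σ_{j=1}^{k} d̃²(F_{j+1},F_j)` with `C = C(r,R,n)`. -/
theorem dtil_chain_inequality (n : ℕ) (r R : ℝ) (hr : 0 < r) (hrR : r < R) :
    ∃ C > 0, ∀ (k : ℕ) (F : ℕ → Set (EuclideanSpace ℝ (Fin n))),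
      (∀ j ≤ k, MemSrR n r R (F j)) →
      dtil n (F k) (F 0) ^ 2 / (k : ℝ) ≤
        C * ∑ j ∈ Finset.range k, dtil n (F (j + 1)) (F j) ^ 2 := by
  set m := Module.finrank ℝ (EuclideanSpace ℝ (Fin n)) - 1
  have hR : 0 < R := hr.trans hrR
  have hc : 0 < r / (2 * R) * (r ^ m / 2) := by positivity
  set c := r / (2 * R) * (r ^ m / 2)
  refine ⟨R ^ m / 2 / c, by positivity, fun k F hF => ?_⟩
  rcases k.eq_zero_or_pos with rfl | hk
  · simp
  have hF' : ∀ j ≤ k, IsStarDomain r R (F j) := fun j hj => (hF j hj).isStarDomain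
  set W : ℕ → ℕ → ℝ := fun i j => ∫ θ, (radialFun (F i) θ - radialFun (F j) θ) ^ 2
    ∂(volume : Measure (EuclideanSpace ℝ (Fin n))).toSphere
  have hstep : ∀ j ∈ Finset.range k, W (j + 1) j ≤ dtil n (F (j + 1)) (F j) ^ 2 / c :=
    fun j hj => by
      have hj := Finset.mem_range.1 hj
      rw [le_div_iff₀ hc, mul_comm, dtil_sq]
      exact (hF' _ hj).le_integral_symmDiff_infDist volume (hF' _ hj.le) hr
  calc dtil n (F k) (F 0) ^ 2 / k
      ≤ R ^ m / 2 * W k 0 / k := by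
        rw [dtil_sq]
        gcongr
        exact (hF' k le_rfl).integral_symmDiff_infDist_le volume (hF' 0 k.zero_le) hr
    _ ≤ R ^ m / 2 * (k * ∑ j ∈ Finset.range k, W (j + 1) j) / k := by
        gcongr
        exact integral_sq_sub_le_mul_sum (fun j => radialFun (F j)) k fun j hj =>
          (hF' _ hj).integrable_sq_sub_radialFun volume (hF' _ hj.le) hr
    _ = R ^ m / 2 * ∑ j ∈ Finset.range k, W (j + 1) j := by field_simp
    _ ≤ R ^ m / 2 * ∑ j ∈ Finset.range k, dtil n (F (j + 1)) (F j) ^ 2 / c := by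
        gcongr with j hj
        exact hstep j hj
    _ = R ^ m / 2 / c * ∑ j ∈ Finset.range k, dtil n (F (j + 1)) (F j) ^ 2 := by
        rw [← Finset.sum_div]; ring
end
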